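/- arXiv:1307.5406 — 5 statements merged into one kernel-verified Lean document; each statement's English description precedes it below -/
import Mathlib

section
/- Let E be a real Banach space and N = (N¹,…,Nⁿ) : E → ℝⁿ a C^∞ map with N(0) = 0. Write N̂ = (N²,…,Nⁿ). Assume: (ii) the differential DN̂(0) : E → ℝ^{n−1} is surjective; (iii) DN¹(0) = 0; (iv) there exist vectors w₊, w₋ ∈ E with D²N¹(0)[w₊,w₊] = 1, D²N¹(0)[w₋,w₋] = −1 and DN̂(0)w₊ = DN̂(0)w₋ = 0. Let w ∈ E satisfy D²N¹(0)[w,w] = 0 and DN̂(0)w = 0. Then there exist ε > 0 and a map γ : (−ε,ε) → E such that γ(0) = 0, γ is differentiable at t = 0 with derivative w, and N(γ(t)) = 0 for all t ∈ (−ε,ε). -/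
open Set

open Filter Asymptotics Topology

set_option maxHeartbeats 1000000


private lemma two_ne_infty : (2 : WithTop ℕ∞) ≠ (⊤:ℕ∞) := by decide
/-- derivative of deriv exists for C² functions on ℝ -/
private lemma derivDiff {X : Type*} [NormedAddCommGroup X] [NormedSpace ℝ X]
    {c : ℝ → X} (hc : ContDiffAt ℝ 2 c 0) : DifferentiableAt ℝ (deriv c) 0 := by
  have h1 : ContDiffAt ℝ 1 (fderiv ℝ c) 0 := hc.fderiv_right (by norm_num)
  have h2 : DifferentiableAt ℝ (fun t => (fderiv ℝ c t) (1:ℝ)) 0 :=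
    (h1.differentiableAt one_ne_zero).clm_apply (differentiableAt_const _)
  exact h2.congr_of_eventuallyEq (Eventually.of_forall fun t => rfl)

/-- Second derivative along a curve through 0 with vanishing first differential. -/
private lemma SD {X : Type*} [NormedAddCommGroup X] [NormedSpace ℝ X]
    (f : X → ℝ) (c : ℝ → X) (v : X)
    (hf : ContDiffAt ℝ 2 f 0) (hf0 : fderiv ℝ f 0 = 0) (hc0 : c 0 = 0)
    (hc2 : ContDiffAt ℝ 2 c 0) (hc1 : HasDerivAt c v 0) :
    deriv (deriv (fun t => f (c t))) 0 = fderiv ℝ (fderiv ℝ f) 0 v v := by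
  have hce : ∀ᶠ t in 𝓝 (0:ℝ), ContDiffAt ℝ 2 c t := hc2.eventually two_ne_infty
  have hcc : Tendsto c (𝓝 0) (𝓝 0) := by
    have := hc1.continuousAt.tendsto; rwa [hc0] at this
  have hfe : ∀ᶠ t in 𝓝 (0:ℝ), ContDiffAt ℝ 2 f (c t) :=
    hcc.eventually (hf.eventually two_ne_infty)
  have h1 : deriv (fun t => f (c t)) =ᶠ[𝓝 (0:ℝ)]
      fun t => (fderiv ℝ f (c t)) (deriv c t) := by
    filter_upwards [hce, hfe] with t hct hft
    exact (((hft.differentiableAt two_ne_zero).hasFDerivAt).comp_hasDerivAt t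
      ((hct.differentiableAt two_ne_zero).hasDerivAt)).deriv
  rw [h1.deriv_eq]
  have hfd2 : HasFDerivAt (fderiv ℝ f) (fderiv ℝ (fderiv ℝ f) 0) (c 0) := by
    rw [hc0]
    exact ((hf.fderiv_right (by norm_num : (1:WithTop ℕ∞) + 1 ≤ 2)).differentiableAt
      one_ne_zero).hasFDerivAt
  have hA : HasDerivAt (fun t => fderiv ℝ f (c t)) (fderiv ℝ (fderiv ℝ f) 0 v) 0 :=
    hfd2.comp_hasDerivAt 0 hc1
  have hu : HasDerivAt (deriv c) (deriv (deriv c) 0) 0 := (derivDiff hc2).hasDerivAt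
  have key := hA.clm_apply hu
  rw [key.deriv, hc1.deriv, hc0, hf0]
  simp

/-- L'Hôpital: quadratic limit. -/
private lemma QL (φ : ℝ → ℝ) (hφ : ContDiffAt ℝ 2 φ 0) (h0 : φ 0 = 0)
    (h1 : deriv φ 0 = 0) :
    Tendsto (fun t => φ t / t ^ 2) (𝓝[≠] (0:ℝ)) (𝓝 (deriv (deriv φ) 0 / 2)) := by
  have hφe : ∀ᶠ t in 𝓝 (0:ℝ), ContDiffAt ℝ 2 φ t := hφ.eventually two_ne_infty
  have hdf : ∀ᶠ x in 𝓝[≠] (0:ℝ), DifferentiableAt ℝ φ x :=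
    eventually_nhdsWithin_of_eventually_nhds <|
      hφe.mono fun t ht => ht.differentiableAt two_ne_zero
  have hg' : ∀ᶠ x in 𝓝[≠] (0:ℝ), deriv (fun y : ℝ => y ^ 2) x ≠ 0 := by
    filter_upwards [self_mem_nhdsWithin] with x (hx : x ≠ 0)
    simp [hx]
  have hfa : Tendsto φ (𝓝[≠] (0:ℝ)) (𝓝 0) := by
    have := (hφ.differentiableAt two_ne_zero).continuousAt.tendsto
    rw [h0] at this
    exact this.mono_left nhdsWithin_le_nhds
  have hga : Tendsto (fun y : ℝ => y ^ 2) (𝓝[≠] (0:ℝ)) (𝓝 0) := by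
    have : Tendsto (fun y : ℝ => y ^ 2) (𝓝 0) (𝓝 ((0:ℝ) ^ 2)) :=
      (continuous_pow 2).tendsto 0
    simpa using this.mono_left nhdsWithin_le_nhds
  have hslope : Tendsto (slope (deriv φ) 0) (𝓝[≠] (0:ℝ)) (𝓝 (deriv (deriv φ) 0)) :=
    hasDerivAt_iff_tendsto_slope.1 (derivDiff hφ).hasDerivAt
  have hdiv : Tendsto (fun x => deriv φ x / deriv (fun y : ℝ => y ^ 2) x) (𝓝[≠] (0:ℝ))
      (𝓝 (deriv (deriv φ) 0 / 2)) := by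
    have h2 := hslope.div_const 2
    refine h2.congr' ?_
    filter_upwards [self_mem_nhdsWithin] with x (hx : x ≠ 0)
    rw [slope_def_field]
    simp only [deriv_pow_field, pow_one, Nat.cast_ofNat]
    rw [h1, sub_zero, sub_zero]
    rw [pow_one, div_div]
    ring_nf
  exact deriv.lhopital_zero_nhdsNE hdf hg' hfa hga hdiv

/-- Lemma A.1 of the paper. Let `E` be a real Banach space and
`N = (N¹, N̂) : E → ℝ × ℝ^{n-1}` a `C^∞` map with `N(0) = 0`.  Assume `DN̂(0)` is
surjective, `DN¹(0) = 0`, and there are vectors `w₊, w₋` in the kernel of `DN̂(0)`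
with `D²N¹(0)[w₊,w₊] = 1` and `D²N¹(0)[w₋,w₋] = -1` (second derivatives being taken
along lines, `D²N¹(0)[v,v] = (d/dt)² N¹(tv) |_{t=0}`).  Then every `w` with
`D²N¹(0)[w,w] = 0` and `DN̂(0)w = 0` is the derivative at `0` of a path `γ`,
defined near `0`, with `γ(0) = 0` along which `N` vanishes identically. -/
theorem statement0
    {E : Type*} [NormedAddCommGroup E] [NormedSpace ℝ E] [CompleteSpace E]
    {n : ℕ} (hn : 1 ≤ n)
    (N1 : E → ℝ) (Nhat : E → Fin (n - 1) → ℝ)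
    (hN1smooth : ContDiff ℝ (⊤ : ℕ∞) N1) (hNhatsmooth : ContDiff ℝ (⊤ : ℕ∞) Nhat)
    (hN10 : N1 0 = 0) (hNhat0 : Nhat 0 = 0)
    (hsurj : Function.Surjective (fderiv ℝ Nhat 0))
    (hD1 : fderiv ℝ N1 0 = 0)
    (wp wm : E)
    (hwp2 : deriv (deriv (fun t : ℝ => N1 (t • wp))) 0 = 1)
    (hwm2 : deriv (deriv (fun t : ℝ => N1 (t • wm))) 0 = -1)
    (hwpker : fderiv ℝ Nhat 0 wp = 0) (hwmker : fderiv ℝ Nhat 0 wm = 0)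
    (w : E)
    (hw2 : deriv (deriv (fun t : ℝ => N1 (t • w))) 0 = 0)
    (hwker : fderiv ℝ Nhat 0 w = 0) :
    ∃ ε > (0 : ℝ), ∃ γ : ℝ → E, γ 0 = 0 ∧ HasDerivAt γ w 0 ∧
      ∀ t ∈ Ioo (-ε) ε, N1 (γ t) = 0 ∧ Nhat (γ t) = 0 := by
  classical
  set L : E →L[ℝ] (Fin (n-1) → ℝ) := fderiv ℝ Nhat 0 with hL
  -- right inverse of L
  have hr : ∀ i : Fin (n-1), ∃ x : E, L x = Pi.single i 1 := fun i => hsurj _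
  choose r hrr using hr
  set R : (Fin (n-1) → ℝ) →L[ℝ] E :=
    ∑ i : Fin (n-1), (ContinuousLinearMap.proj i).smulRight (r i) with hR
  have hLR : ∀ z : Fin (n-1) → ℝ, L (R z) = z := by
    intro z
    rw [hR]
    ext j
    simp only [ContinuousLinearMap.sum_apply, ContinuousLinearMap.smulRight_apply,
      ContinuousLinearMap.proj_apply, map_sum, map_smul, hrr, Finset.sum_apply,
      Pi.smul_apply, smul_eq_mul, Pi.single_apply, mul_ite, mul_one, mul_zero]
    rw [Finset.sum_ite_eq]
    simp
  -- the injection ι : V → E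
  set ι : (Fin 3 → ℝ) →L[ℝ] E := (ContinuousLinearMap.proj 0).smulRight w
      + (ContinuousLinearMap.proj 1).smulRight wp
      + (ContinuousLinearMap.proj 2).smulRight wm with hιdef
  have hι : ∀ v : Fin 3 → ℝ, ι v = v 0 • w + v 1 • wp + v 2 • wm := by
    intro v; rw [hιdef]; rfl
  have hLι : ∀ v : Fin 3 → ℝ, L (ι v) = 0 := by
    intro v
    rw [hι]
    simp only [map_add, map_smul, hwker, hwpker, hwmker, smul_zero, add_zero]
  -- the map Θ
  set A : ((Fin 3 → ℝ) × (Fin (n-1) → ℝ)) →L[ℝ] E :=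
    ι.comp (.fst ℝ _ _) + R.comp (.snd ℝ _ _) with hAdef
  have hA : ∀ p : (Fin 3 → ℝ) × (Fin (n-1) → ℝ), A p = ι p.1 + R p.2 := by
    intro p; rw [hAdef]; rfl
  set Θ : ((Fin 3 → ℝ) × (Fin (n-1) → ℝ)) → ((Fin 3 → ℝ) × (Fin (n-1) → ℝ)) :=
    fun p => (p.1, Nhat (A p)) with hΘ
  have hΘsm : ContDiffAt ℝ 2 Θ (0,0) := by
    rw [hΘ]
    exact (contDiff_fst.prodMk ((hNhatsmooth.of_le (by decide)).comp A.contDiff)).contDiffAt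
  have hA0 : A (0,0) = 0 := by rw [hA]; simp
  have hNhatfd : HasFDerivAt Nhat L (A (0,0)) := by
    rw [hA0, hL]
    exact (hNhatsmooth.differentiable (by simp) 0).hasFDerivAt
  have hΘfd : HasFDerivAt Θ
      ((ContinuousLinearMap.fst ℝ _ _).prod (L.comp A)) (0,0) := by
    rw [hΘ]
    exact HasFDerivAt.prodMk hasFDerivAt_fst (hNhatfd.comp (0,0) A.hasFDerivAt)
  set ee : ((Fin 3 → ℝ) × (Fin (n-1) → ℝ)) ≃L[ℝ] ((Fin 3 → ℝ) × (Fin (n-1) → ℝ)) :=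
    ContinuousLinearEquiv.refl ℝ _ with heedef
  have heq : (ContinuousLinearMap.fst ℝ (Fin 3 → ℝ) (Fin (n-1) → ℝ)).prod (L.comp A)
      = (ee : ((Fin 3 → ℝ) × (Fin (n-1) → ℝ)) →L[ℝ] ((Fin 3 → ℝ) × (Fin (n-1) → ℝ))) := by
    rw [heedef]
    refine ContinuousLinearMap.ext fun p => ?_
    have h2 : L (A p) = p.2 := by rw [hA, map_add, hLι, hLR, zero_add]
    simp [h2]
  -- inverse function theorem
  have hΘfd' : HasFDerivAt Θ
      ((ee : ((Fin 3 → ℝ) × (Fin (n-1) → ℝ)) →L[ℝ] ((Fin 3 → ℝ) × (Fin (n-1) → ℝ)))) (0,0) := by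
    rw [← heq]; exact hΘfd
  have hΘ00 : Θ (0,0) = (0,0) := by
    rw [hΘ]
    simp only [hA0, hNhat0]
  set τ : ((Fin 3 → ℝ) × (Fin (n-1) → ℝ)) → ((Fin 3 → ℝ) × (Fin (n-1) → ℝ)) :=
    hΘsm.localInverse hΘfd' two_ne_zero with hτdef
  have hτ0 : τ (0,0) = (0,0) := by
    have := hΘsm.localInverse_apply_image hΘfd' two_ne_zero
    rw [hΘ00] at this
    rw [hτdef]
    exact this
  have hτsm : ContDiffAt ℝ 2 τ (0,0) := by
    have := hΘsm.to_localInverse hΘfd' two_ne_zero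
    rw [hΘ00] at this
    rw [hτdef]; exact this
  have hτfd : HasFDerivAt τ
      ((ee.symm : ((Fin 3 → ℝ) × (Fin (n-1) → ℝ)) →L[ℝ] ((Fin 3 → ℝ) × (Fin (n-1) → ℝ)))) (0,0) := by
    have h := (hΘsm.hasStrictFDerivAt' hΘfd' two_ne_zero).to_localInverse
    rw [hΘ00] at h
    exact h.hasFDerivAt
  have hτright : ∀ᶠ p in 𝓝 ((0,0) : (Fin 3 → ℝ) × (Fin (n-1) → ℝ)), Θ (τ p) = p := by
    have h := (hΘsm.hasStrictFDerivAt' hΘfd' two_ne_zero).eventually_right_inverse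
    rw [hΘ00] at h
    exact h
  -- the implicit map ψ
  set ψ : (Fin 3 → ℝ) → E := fun v => ι v + R ((τ (v, 0)).2) with hψdef
  have hψ0 : ψ 0 = 0 := by
    rw [hψdef]
    simp only [hτ0]
    simp
  -- Nhat vanishes on ψ near 0
  have hj : Continuous (fun v : Fin 3 → ℝ => (v, (0 : Fin (n-1) → ℝ))) :=
    continuous_id.prodMk continuous_const
  have hjt : Filter.Tendsto (fun v : Fin 3 → ℝ => (v, (0 : Fin (n-1) → ℝ))) (𝓝 0)
      (𝓝 ((0,0) : (Fin 3 → ℝ) × (Fin (n-1) → ℝ))) := hj.tendsto' 0 (0,0) rfl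
  have hNhatψ : ∀ᶠ v in 𝓝 (0 : Fin 3 → ℝ), Nhat (ψ v) = 0 := by
    filter_upwards [hjt.eventually hτright] with v hv
    have h1 : (τ (v, 0)).1 = v := congrArg Prod.fst hv
    have h2 : Nhat (A (τ (v, 0))) = 0 := congrArg Prod.snd hv
    rw [hA, h1] at h2
    rw [hψdef]
    exact h2
  -- smoothness and derivative of ψ
  have hτj : ContDiffAt ℝ 2 (fun v : Fin 3 → ℝ => τ (v, 0)) 0 := by
    refine ContDiffAt.comp 0 ?_ ?_
    · exact hτsm
    · exact (contDiff_id.prodMk contDiff_const).contDiffAt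
  have hψsm : ContDiffAt ℝ 2 ψ 0 := by
    rw [hψdef]
    exact ι.contDiff.contDiffAt.add
      (R.contDiff.contDiffAt.comp 0 (contDiffAt_snd.comp 0 hτj))
  have hψfd : HasFDerivAt ψ ι 0 := by
    have hjfd : HasFDerivAt (fun v : Fin 3 → ℝ => (v, (0 : Fin (n-1) → ℝ)))
        (ContinuousLinearMap.inl ℝ (Fin 3 → ℝ) (Fin (n-1) → ℝ)) 0 :=
      (ContinuousLinearMap.inl ℝ (Fin 3 → ℝ) (Fin (n-1) → ℝ)).hasFDerivAt
    have h1 : HasFDerivAt (fun v : Fin 3 → ℝ => τ (v, 0))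
        (((ee.symm : ((Fin 3 → ℝ) × (Fin (n-1) → ℝ)) →L[ℝ] ((Fin 3 → ℝ) × (Fin (n-1) → ℝ)))).comp
            (ContinuousLinearMap.inl ℝ (Fin 3 → ℝ) (Fin (n-1) → ℝ))) 0 :=
      HasFDerivAt.comp (g := τ) (f := fun v : Fin 3 → ℝ => (v, (0 : Fin (n-1) → ℝ))) 0 hτfd hjfd
    have hyfd : HasFDerivAt (fun v : Fin 3 → ℝ => (τ (v, 0)).2)
        ((ContinuousLinearMap.snd ℝ (Fin 3 → ℝ) (Fin (n-1) → ℝ)).comp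
          (((ee.symm : ((Fin 3 → ℝ) × (Fin (n-1) → ℝ)) →L[ℝ] ((Fin 3 → ℝ) × (Fin (n-1) → ℝ)))).comp
            (ContinuousLinearMap.inl ℝ (Fin 3 → ℝ) (Fin (n-1) → ℝ)))) 0 := by
      exact (hasFDerivAt_snd.comp 0 h1)
    have hz : ((ContinuousLinearMap.snd ℝ (Fin 3 → ℝ) (Fin (n-1) → ℝ)).comp
          (((ee.symm : ((Fin 3 → ℝ) × (Fin (n-1) → ℝ)) →L[ℝ] ((Fin 3 → ℝ) × (Fin (n-1) → ℝ)))).comp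
            (ContinuousLinearMap.inl ℝ (Fin 3 → ℝ) (Fin (n-1) → ℝ)))) = 0 := by
      refine ContinuousLinearMap.ext fun v => ?_
      rw [heedef]
      simp
    rw [hz] at hyfd
    have := ι.hasFDerivAt.add ((R.hasFDerivAt).comp 0 hyfd)
    simp at this; exact this
  -- the scalar function G
  set G : (Fin 3 → ℝ) → ℝ := fun v => N1 (ψ v) with hG
  have hGsm : ContDiffAt ℝ 2 G 0 := by
    rw [hG]
    refine ContDiffAt.comp 0 ?_ hψsm
    rw [hψ0]
    exact (hN1smooth.of_le (by decide)).contDiffAt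
  have hG0 : G 0 = 0 := by rw [hG]; simp only [hψ0, hN10]
  have hGfd : HasFDerivAt G ((fderiv ℝ N1 0).comp ι) 0 := by
    rw [hG]
    have h1 : HasFDerivAt N1 (fderiv ℝ N1 0) (ψ 0) := by
      rw [hψ0]
      exact ((hN1smooth.differentiable (by simp)) 0).hasFDerivAt
    exact h1.comp 0 hψfd
  have hGfd0 : HasFDerivAt G (0 : (Fin 3 → ℝ) →L[ℝ] ℝ) 0 := by
    have : (fderiv ℝ N1 0).comp ι = 0 := by rw [hD1]; ext v; simp
    rw [← this]; exact hGfd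
  have hGf0 : fderiv ℝ G 0 = 0 := hGfd0.fderiv
  -- line curves
  have hlinecE : ∀ v : E, ContDiffAt ℝ 2 (fun t : ℝ => t • v) 0 := fun v =>
    (contDiff_id.smul contDiff_const).contDiffAt
  have hlinedE : ∀ v : E, HasDerivAt (fun t : ℝ => t • v) v 0 := fun v => by
    simpa using (hasDerivAt_id (0:ℝ)).smul_const v
  have hlinec : ∀ v : Fin 3 → ℝ, ContDiffAt ℝ 2 (fun t : ℝ => t • v) 0 := fun v =>
    (contDiff_id.smul contDiff_const).contDiffAt
  have hlined : ∀ v : Fin 3 → ℝ, HasDerivAt (fun t : ℝ => t • v) v 0 := fun v => by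
    simpa using (hasDerivAt_id (0:ℝ)).smul_const v
  have hN1c : ContDiffAt ℝ 2 N1 0 := (hN1smooth.of_le (by decide)).contDiffAt
  -- quadratic form on Fin 3 → ℝ
  set q : (Fin 3 → ℝ) → ℝ := fun v => fderiv ℝ (fderiv ℝ G) 0 v v with hqdef
  clear_value q G ψ τ
  have hqline : ∀ v : Fin 3 → ℝ, deriv (deriv (fun t : ℝ => G (t • v))) 0 = q v := by
    intro v
    rw [hqdef]
    exact SD G (fun t : ℝ => t • v) v hGsm hGf0 (by simp) (hlinec v) (hlined v)
  have hline1 : ∀ u : E, deriv (deriv (fun t : ℝ => N1 (t • u))) 0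
      = fderiv ℝ (fderiv ℝ N1) 0 u u := fun u =>
    SD N1 (fun t : ℝ => t • u) u hN1c hD1 (by simp) (hlinecE u) (hlinedE u)
  have hcurve : ∀ v : Fin 3 → ℝ, deriv (deriv (fun t : ℝ => G (t • v))) 0
      = fderiv ℝ (fderiv ℝ N1) 0 (ι v) (ι v) := by
    intro v
    have hGψ : (fun t : ℝ => G (t • v)) = fun t : ℝ => N1 (ψ (t • v)) := by rw [hG]
    rw [hGψ]
    refine SD N1 (fun t : ℝ => ψ (t • v)) (ι v) hN1c hD1 (by simp [hψ0]) ?_ ?_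
    · exact ContDiffAt.comp 0 (show ContDiffAt ℝ 2 ψ ((0:ℝ) • v) by
        rw [zero_smul]; exact hψsm) (hlinec v)
    · exact (show HasFDerivAt ψ ι ((0:ℝ) • v) by rw [zero_smul]; exact hψfd).comp_hasDerivAt
        0 (hlined v)
  have hq : ∀ v : Fin 3 → ℝ, q v = deriv (deriv (fun t : ℝ => N1 (t • ι v))) 0 := by
    intro v
    rw [← hqline, hcurve, ← hline1]
  -- basis vectors
  set e0 : Fin 3 → ℝ := Pi.single 0 1 with he0
  set e1 : Fin 3 → ℝ := Pi.single 1 1 with he1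
  set e2 : Fin 3 → ℝ := Pi.single 2 1 with he2
  have hιe0 : ι e0 = w := by rw [hι, he0]; simp
  have hιe1 : ι e1 = wp := by rw [hι, he1]; simp
  have hιe2 : ι e2 = wm := by rw [hι, he2]; simp
  have hq0 : q e0 = 0 := by rw [hq, hιe0]; exact hw2
  have hq1 : q e1 = 1 := by rw [hq, hιe1]; exact hwp2
  have hq2 : q e2 = -1 := by rw [hq, hιe2]; exact hwm2
  have hne0 : ‖e0‖ = 1 := by rw [he0, Pi.norm_single, norm_one]
  have hne1 : ‖e1‖ = 1 := by rw [he1, Pi.norm_single, norm_one]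
  have hne2 : ‖e2‖ = 1 := by rw [he2, Pi.norm_single, norm_one]
  clear_value e0 e1 e2
  -- parallelogram
  have hpar : ∀ (x z : Fin 3 → ℝ) (δ : ℝ),
      q (x + δ • z) + q (x - δ • z) = 2 * q x + 2 * δ^2 * q z := by
    intro x z δ
    rw [hqdef]
    simp only [map_add, map_sub, map_smul, ContinuousLinearMap.add_apply,
      ContinuousLinearMap.sub_apply, ContinuousLinearMap.coe_smul', Pi.smul_apply,
      smul_eq_mul]
    ring
  -- a good ball around 0
  obtain ⟨r₀, hr₀pos, hball⟩ : ∃ r₀ > 0, ∀ v : Fin 3 → ℝ, ‖v‖ < r₀ →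
      (Nhat (ψ v) = 0 ∧ ContinuousAt G v) := by
    have hev : ∀ᶠ v in 𝓝 (0 : Fin 3 → ℝ), Nhat (ψ v) = 0 ∧ ContinuousAt G v :=
      hNhatψ.and ((hGsm.eventually two_ne_infty).mono fun v hv => hv.continuousAt)
    rw [Metric.eventually_nhds_iff] at hev
    obtain ⟨ε, hε, h⟩ := hev
    exact ⟨ε, hε, fun v hv => h (by rwa [dist_zero_right])⟩
  -- sign lemmas
  have hsign : ∀ u : Fin 3 → ℝ, ∀ᶠ t in 𝓝[≠] (0:ℝ),
      (0 < q u → 0 < G (t • u)) ∧ (q u < 0 → G (t • u) < 0) := by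
    intro u
    have hφsm : ContDiffAt ℝ 2 (fun t : ℝ => G (t • u)) 0 :=
      ContDiffAt.comp 0 (show ContDiffAt ℝ 2 G ((0:ℝ) • u) by
        rw [zero_smul]; exact hGsm) (hlinec u)
    have hφ0 : (fun t : ℝ => G (t • u)) 0 = 0 := by simp [hG0]
    have hφd : HasDerivAt (fun t : ℝ => G (t • u)) 0 0 := by
      have := (show HasFDerivAt G (0 : (Fin 3 → ℝ) →L[ℝ] ℝ) ((0:ℝ) • u) by
        rw [zero_smul]; exact hGfd0).comp_hasDerivAt 0 (hlined u)
      simp at this; exact this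
    have hlim := QL _ hφsm hφ0 hφd.deriv
    rw [hqline u] at hlim
    have ht2 : ∀ᶠ t in 𝓝[≠] (0:ℝ), t ≠ 0 := self_mem_nhdsWithin
    by_cases hqu : 0 < q u
    · have h1 : ∀ᶠ t in 𝓝[≠] (0:ℝ), 0 < G (t • u) / t ^ 2 :=
        hlim.eventually (eventually_gt_nhds (by positivity))
      filter_upwards [ht2, h1] with t ht h1t
      refine ⟨fun _ => ?_, fun hneg => absurd hneg (not_lt.2 hqu.le)⟩
      have ht2' : (0:ℝ) < t ^ 2 := by positivity
      have h2 := mul_pos h1t ht2'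
      rwa [div_mul_cancel₀ _ (pow_ne_zero _ ht)] at h2
    · by_cases hqu' : q u < 0
      · have h1 : ∀ᶠ t in 𝓝[≠] (0:ℝ), G (t • u) / t ^ 2 < 0 :=
          hlim.eventually (eventually_lt_nhds (div_neg_of_neg_of_pos hqu' two_pos))
        filter_upwards [ht2, h1] with t ht h1t
        refine ⟨fun hpos => absurd hpos hqu, fun _ => ?_⟩
        have ht2' : (0:ℝ) < t ^ 2 := by positivity
        have h2 := mul_neg_of_neg_of_pos h1t ht2'
        rwa [div_mul_cancel₀ _ (pow_ne_zero _ ht)] at h2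
      · filter_upwards with t
        exact ⟨fun h => absurd h hqu, fun h => absurd h hqu'⟩
  -- main claim: approximate zeros at scale δ
  have claimA : ∀ δ : ℝ, 0 < δ → δ ≤ 1 → ∃ t₁ > 0, ∀ t : ℝ, t ≠ 0 → |t| < t₁ →
      ∃ u : Fin 3 → ℝ, ‖u - e0‖ ≤ δ ∧ ‖t • u‖ < r₀ ∧ G (t • u) = 0 := by
    intro δ hδ hδ1
    -- find a direction with positive q
    have hd1 : ∀ z : Fin 3 → ℝ, ‖z‖ = 1 → ‖(e0 + δ • z) - e0‖ ≤ δ ∧ ‖(e0 - δ • z) - e0‖ ≤ δ := by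
      intro z hz
      constructor
      · rw [add_sub_cancel_left, norm_smul, hz, Real.norm_eq_abs, abs_of_pos hδ, mul_one]
      · rw [sub_sub_cancel_left, norm_neg, norm_smul, hz, Real.norm_eq_abs, abs_of_pos hδ,
          mul_one]
    obtain ⟨up, hupq, hupn⟩ : ∃ u : Fin 3 → ℝ, δ^2 ≤ q u ∧ ‖u - e0‖ ≤ δ := by
      have hs := hpar e0 e1 δ
      rw [hq0, hq1] at hs
      rcases le_or_gt (δ^2) (q (e0 + δ • e1)) with h | h
      · exact ⟨_, h, (hd1 e1 hne1).1⟩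
      · refine ⟨_, by linarith, (hd1 e1 hne1).2⟩
    obtain ⟨um, humq, humn⟩ : ∃ u : Fin 3 → ℝ, q u ≤ -δ^2 ∧ ‖u - e0‖ ≤ δ := by
      have hs := hpar e0 e2 δ
      rw [hq0, hq2] at hs
      rcases le_or_gt (q (e0 + δ • e2)) (-δ^2) with h | h
      · exact ⟨_, h, (hd1 e2 hne2).1⟩
      · refine ⟨_, by linarith, (hd1 e2 hne2).2⟩
    have huppos : 0 < q up := lt_of_lt_of_le (by positivity) hupq
    have humneg : q um < 0 := lt_of_le_of_lt humq (neg_lt_zero.mpr (by positivity))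
    have hev := (hsign up).and (hsign um)
    rw [Filter.Eventually, Metric.mem_nhdsWithin_iff] at hev
    obtain ⟨t₂, ht₂, hsub⟩ := hev
    refine ⟨min t₂ (r₀ / 4), by positivity, fun t ht htlt => ?_⟩
    have htt₂ : |t| < t₂ := lt_of_lt_of_le htlt (min_le_left _ _)
    have htr₀ : |t| < r₀ / 4 := lt_of_lt_of_le htlt (min_le_right _ _)
    have hmem : t ∈ Metric.ball (0:ℝ) t₂ ∩ {(0:ℝ)}ᶜ := by
      constructor
      · rw [Metric.mem_ball, Real.dist_eq, sub_zero]; exact htt₂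
      · simpa using ht
    obtain ⟨hsgn_up, hsgn_um⟩ := hsub hmem
    have hGp : 0 < G (t • up) := hsgn_up.1 huppos
    have hGm : G (t • um) < 0 := hsgn_um.2 humneg
    -- norms of up, um
    have hupb : ‖up‖ ≤ 2 := by
      calc ‖up‖ = ‖(up - e0) + e0‖ := by rw [sub_add_cancel]
      _ ≤ ‖up - e0‖ + ‖e0‖ := norm_add_le _ _
      _ ≤ δ + 1 := by rw [hne0]; exact add_le_add_left hupn 1
      _ ≤ 2 := by linarith
    have humb : ‖um‖ ≤ 2 := by
      calc ‖um‖ = ‖(um - e0) + e0‖ := by rw [sub_add_cancel]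
      _ ≤ ‖um - e0‖ + ‖e0‖ := norm_add_le _ _
      _ ≤ δ + 1 := by rw [hne0]; exact add_le_add_left humn 1
      _ ≤ 2 := by linarith
    have hseg : ∀ θ ∈ Icc (0:ℝ) 1, ‖t • ((1-θ) • um + θ • up)‖ < r₀ := by
      intro θ hθ
      obtain ⟨hθ0, hθ1⟩ := hθ
      have h1 : ‖(1-θ) • um + θ • up‖ ≤ 2 := by
        calc ‖(1-θ) • um + θ • up‖ ≤ ‖(1-θ) • um‖ + ‖θ • up‖ := norm_add_le _ _
        _ = (1-θ) * ‖um‖ + θ * ‖up‖ := by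
            rw [norm_smul, norm_smul, Real.norm_eq_abs, Real.norm_eq_abs,
              abs_of_nonneg (by linarith), abs_of_nonneg hθ0]
        _ ≤ (1-θ) * 2 + θ * 2 := by
            apply add_le_add
            · exact mul_le_mul_of_nonneg_left humb (by linarith)
            · exact mul_le_mul_of_nonneg_left hupb hθ0
        _ = 2 := by ring
      calc ‖t • ((1-θ) • um + θ • up)‖ = |t| * ‖(1-θ) • um + θ • up‖ := by
            rw [norm_smul, Real.norm_eq_abs]
      _ ≤ |t| * 2 := by
            exact mul_le_mul_of_nonneg_left h1 (abs_nonneg t)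
      _ < r₀ := by linarith
    -- intermediate value theorem
    set h : ℝ → ℝ := fun θ => G (t • ((1-θ) • um + θ • up)) with hhdef
    have hhc : ContinuousOn h (Icc 0 1) := by
      intro θ hθ
      have hc1 : Continuous (fun θ : ℝ => t • ((1-θ) • um + θ • up)) :=
        by fun_prop
      have hc2 : ContinuousAt G (t • ((1-θ) • um + θ • up)) := (hball _ (hseg θ hθ)).2
      exact (ContinuousAt.comp (f := fun θ : ℝ => t • ((1-θ) • um + θ • up))
        hc2 hc1.continuousAt).continuousWithinAt
    have hh0 : h 0 = G (t • um) := by rw [hhdef]; norm_num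
    have hh1 : h 1 = G (t • up) := by rw [hhdef]; norm_num
    have hmem0 : (0:ℝ) ∈ Icc (h 0) (h 1) := by
      rw [hh0, hh1]; exact ⟨hGm.le, hGp.le⟩
    obtain ⟨θ, hθmem, hθ⟩ := intermediate_value_Icc (zero_le_one) hhc hmem0
    refine ⟨(1-θ) • um + θ • up, ?_, hseg θ hθmem, hθ⟩
    obtain ⟨hθ0, hθ1⟩ := hθmem
    have hdecomp : (1-θ) • um + θ • up - e0 = (1-θ) • (um - e0) + θ • (up - e0) := by
      module
    rw [hdecomp]
    calc ‖(1-θ) • (um - e0) + θ • (up - e0)‖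
        ≤ ‖(1-θ) • (um - e0)‖ + ‖θ • (up - e0)‖ := norm_add_le _ _
      _ = (1-θ) * ‖um - e0‖ + θ * ‖up - e0‖ := by
          rw [norm_smul, norm_smul, Real.norm_eq_abs, Real.norm_eq_abs,
            abs_of_nonneg (by linarith), abs_of_nonneg hθ0]
      _ ≤ (1-θ) * δ + θ * δ := by
          apply add_le_add
          · exact mul_le_mul_of_nonneg_left humn (by linarith)
          · exact mul_le_mul_of_nonneg_left hupn hθ0
      _ = δ := by ring
  -- selection of approximate zeros
  set S : ℝ → Set ℝ := fun t =>
    {ρ : ℝ | ∃ u : Fin 3 → ℝ, ‖u - e0‖ ≤ ρ ∧ ‖t • u‖ < r₀ ∧ G (t • u) = 0} with hSdef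
  have hSbdd : ∀ t, BddBelow (S t) := fun t =>
    ⟨0, fun ρ hρ => by obtain ⟨u, h1, _, _⟩ := hρ; exact le_trans (norm_nonneg _) h1⟩
  have hS0 : (0:ℝ) ∈ S 0 := by
    refine ⟨e0, by simp, ?_, ?_⟩
    · simpa using hr₀pos
    · simpa using hG0
  obtain ⟨T₀, hT₀pos, hT₀⟩ := claimA 1 one_pos le_rfl
  have hSne : ∀ t : ℝ, t ≠ 0 → |t| < T₀ → (S t).Nonempty := by
    intro t ht htl
    obtain ⟨u, h1, h2, h3⟩ := hT₀ t ht htl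
    exact ⟨1, u, h1, h2, h3⟩
  have hSmem : ∀ t δ : ℝ, 0 < δ → δ ≤ 1 → (∃ u : Fin 3 → ℝ, ‖u - e0‖ ≤ δ ∧ ‖t • u‖ < r₀ ∧
      G (t • u) = 0) → δ ∈ S t := fun t δ _ _ h => h
  set P : ℝ → Prop := fun t => ∃ u : Fin 3 → ℝ,
    ‖u - e0‖ ≤ sInf (S t) + |t| ∧ ‖t • u‖ < r₀ ∧ G (t • u) = 0 with hPdef
  have hsinf0 : 0 ≤ sInf (S 0) := le_csInf ⟨0, hS0⟩ (fun ρ hρ => by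
    obtain ⟨u, h1, _, _⟩ := hρ; exact le_trans (norm_nonneg _) h1)
  have hP0 : P 0 := by
    rw [hPdef]
    refine ⟨e0, by simpa using hsinf0, ?_, ?_⟩
    · simpa using hr₀pos
    · simpa using hG0
  have hPall : ∀ t : ℝ, t ≠ 0 → |t| < T₀ → P t := by
    intro t ht htl
    rw [hPdef]
    have h1 : sInf (S t) < sInf (S t) + |t| := lt_add_of_pos_right _ (abs_pos.mpr ht)
    obtain ⟨ρ, hρS, hρlt⟩ := (csInf_lt_iff (hSbdd t) (hSne t ht htl)).1 h1
    obtain ⟨u, hu1, hu2, hu3⟩ := hρS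
    exact ⟨u, le_trans hu1 hρlt.le, hu2, hu3⟩
  set uu : ℝ → (Fin 3 → ℝ) := fun t => if h : P t then h.choose else e0 with huudef
  have huuspec : ∀ t : ℝ, P t → ‖uu t - e0‖ ≤ sInf (S t) + |t| ∧ ‖t • uu t‖ < r₀ ∧
      G (t • uu t) = 0 := by
    intro t h
    rw [huudef]
    simp only [dif_pos h]
    have := h.choose_spec
    rw [hPdef] at h
    exact this
  set γ : ℝ → E := fun t => ψ (t • uu t) with hγdef
  have hγ0 : γ 0 = 0 := by rw [hγdef]; simpa using hψ0
  -- smallness of uu t - e0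
  have hsmall : ∀ δ : ℝ, 0 < δ → δ ≤ 1 → ∀ᶠ t in 𝓝 (0:ℝ), ‖uu t - e0‖ ≤ δ + |t| := by
    intro δ hδ hδ1
    obtain ⟨t₁, ht₁pos, ht₁⟩ := claimA δ hδ hδ1
    have hballmem := Metric.ball_mem_nhds (0:ℝ) (lt_min ht₁pos hT₀pos)
    filter_upwards [hballmem] with t htb
    rw [Metric.mem_ball, Real.dist_eq, sub_zero] at htb
    by_cases ht : t = 0
    · subst ht
      have h1 := (huuspec 0 hP0).1
      have h2 : sInf (S 0) ≤ 0 := csInf_le (hSbdd 0) hS0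
      simp only [abs_zero, add_zero] at h1 ⊢
      linarith
    · have hPt := hPall t ht (lt_of_lt_of_le htb (min_le_right _ _))
      have hδS : δ ∈ S t := ht₁ t ht (lt_of_lt_of_le htb (min_le_left _ _))
      have hSle : sInf (S t) ≤ δ := csInf_le (hSbdd t) hδS
      have h1 := (huuspec t hPt).1
      linarith
  have huutend : Tendsto (fun t => uu t - e0) (𝓝 (0:ℝ)) (𝓝 0) := by
    rw [NormedAddCommGroup.tendsto_nhds_zero]
    intro ε hε
    have hδpos : 0 < min (ε/4) 1 := by positivity
    have hballmem := Metric.ball_mem_nhds (0:ℝ) (show (0:ℝ) < ε/4 by positivity)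
    filter_upwards [hsmall _ hδpos (min_le_right _ _), hballmem] with t h1 h2
    rw [Metric.mem_ball, Real.dist_eq, sub_zero] at h2
    have : min (ε/4) 1 ≤ ε/4 := min_le_left _ _
    calc ‖uu t - e0‖ ≤ min (ε/4) 1 + |t| := h1
    _ < ε/4 + ε/4 := by linarith
    _ < ε := by linarith
  have huub : ∀ᶠ t in 𝓝 (0:ℝ), ‖uu t‖ ≤ 3 := by
    have hballmem := Metric.ball_mem_nhds (0:ℝ) one_pos
    filter_upwards [hsmall 1 one_pos le_rfl, hballmem] with t h1 h2
    rw [Metric.mem_ball, Real.dist_eq, sub_zero] at h2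
    calc ‖uu t‖ = ‖(uu t - e0) + e0‖ := by rw [sub_add_cancel]
    _ ≤ ‖uu t - e0‖ + ‖e0‖ := norm_add_le _ _
    _ ≤ (1 + |t|) + 1 := by rw [hne0]; exact add_le_add_left h1 1
    _ ≤ 3 := by linarith
  -- derivative of γ at 0
  have huu' : Tendsto uu (𝓝 (0:ℝ)) (𝓝 e0) := by
    have h := huutend.add (tendsto_const_nhds (x := e0))
    simpa using h
  have hx : Tendsto (fun t : ℝ => t • uu t) (𝓝 0) (𝓝 0) := by
    have h : Tendsto (fun t : ℝ => t • uu t) (𝓝 0) (𝓝 ((0:ℝ) • e0)) :=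
      Tendsto.smul (continuous_id.tendsto (0:ℝ)) huu'
    simpa using h
  have oψ : (fun v : Fin 3 → ℝ => ψ v - ι v) =o[𝓝 0] (fun v : Fin 3 → ℝ => v) := by
    have h := hasFDerivAt_iff_isLittleO_nhds_zero.mp hψfd
    simpa [hψ0] using h
  have o1 : (fun t : ℝ => ψ (t • uu t) - ι (t • uu t)) =o[𝓝 0]
      (fun t : ℝ => t • uu t) := oψ.comp_tendsto hx
  have hxO : (fun t : ℝ => t • uu t) =O[𝓝 0] (fun t : ℝ => t) := by
    rw [Asymptotics.isBigO_iff]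
    refine ⟨3, ?_⟩
    filter_upwards [huub] with t h
    rw [norm_smul]
    calc ‖t‖ * ‖uu t‖ ≤ ‖t‖ * 3 := mul_le_mul_of_nonneg_left h (norm_nonneg t)
    _ = 3 * ‖t‖ := by ring
  have o1' : (fun t : ℝ => ψ (t • uu t) - ι (t • uu t)) =o[𝓝 0] (fun t : ℝ => t) :=
    o1.trans_isBigO hxO
  have o2 : (fun t : ℝ => t • (ι (uu t - e0))) =o[𝓝 0] (fun t : ℝ => t) := by
    rw [Asymptotics.isLittleO_iff]
    intro c hc
    have hz : Tendsto (fun t : ℝ => ι (uu t - e0)) (𝓝 0) (𝓝 (ι 0)) :=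
      (ι.continuous.tendsto _).comp huutend
    rw [map_zero] at hz
    filter_upwards [(NormedAddCommGroup.tendsto_nhds_zero.mp hz) c hc] with t ht
    rw [norm_smul]
    calc ‖t‖ * ‖ι (uu t - e0)‖ ≤ ‖t‖ * c := mul_le_mul_of_nonneg_left ht.le (norm_nonneg t)
    _ = c * ‖t‖ := by ring
  have main : (fun t : ℝ => γ t - t • w) =o[𝓝 0] (fun t : ℝ => t) := by
    have hsum := o1'.add o2
    refine hsum.congr' ?_ EventuallyEq.rfl
    refine Filter.EventuallyEq.of_eq (funext fun t => ?_)
    rw [hγdef]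
    have h1 : ι (uu t - e0) = ι (uu t) - w := by rw [map_sub, hιe0]
    have h2 : ι (t • uu t) = t • ι (uu t) := map_smul ι t (uu t)
    rw [h1, h2, smul_sub]
    abel
  have hder : HasDerivAt γ w 0 := by
    rw [hasDerivAt_iff_isLittleO]
    simp only [hγ0, sub_zero]
    exact main
  -- conclusion
  refine ⟨T₀, hT₀pos, γ, hγ0, hder, ?_⟩
  intro t htmem
  obtain ⟨htl, htr⟩ := htmem
  by_cases ht : t = 0
  · subst ht
    rw [hγ0]
    exact ⟨hN10, hNhat0⟩
  · have habs : |t| < T₀ := abs_lt.mpr ⟨by linarith, htr⟩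
    obtain ⟨h1, h2, h3⟩ := huuspec t (hPall t ht habs)
    constructor
    · rw [hγdef]
      have hGx : G (t • uu t) = N1 (ψ (t • uu t)) := congrFun hG (t • uu t)
      rw [← hGx]
      exact h3
    · rw [hγdef]
      exact (hball _ h2).1
end

section
/- Let E be a real Banach space and N = (N¹,…,Nⁿ) : E → ℝⁿ a C^∞ map with N(0) = 0. Write N̂ = (N²,…,Nⁿ). Assume: (ii) the differential DN̂(0) : E → ℝ^{n−1} is surjective; (iii) DN¹(0) = 0; (iv) there exist vectors w₊, w₋ ∈ E with D²N¹(0)[w₊,w₊] = 1, D²N¹(0)[w₋,w₋] = −1 and DN̂(0)w₊ = DN̂(0)w₋ = 0. Let w ∈ E satisfy DN̂(0)w = 0. Then there exist w₁, w₂ ∈ E with w = w₁ + w₂, DN̂(0)w₁ = DN̂(0)w₂ = 0 and D²N¹(0)[w₁,w₁] = D²N¹(0)[w₂,w₂] = 0; moreover there exist ε > 0 and two maps γ₁, γ₂ : (−ε,ε) → E such that for i = 1, 2: γᵢ(0) = 0, γᵢ is differentiable at t = 0 with derivative wᵢ, and N(γᵢ(t)) = 0 for all t ∈ (−ε,ε).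 -/
open Set Filter Topology

section Auxiliary

variable {E : Type*} [NormedAddCommGroup E] [NormedSpace ℝ E]

/-- second derivative along a line equals the second fderiv applied twice -/
lemma quad_rep (f : E → ℝ) (hf : ContDiff ℝ (⊤ : ℕ∞) f) (x : E) :
    deriv (deriv (fun t : ℝ => f (t • x))) 0 = fderiv ℝ (fderiv ℝ f) 0 x x := by
  have hdf : ContDiff ℝ (⊤ : ℕ∞) (fderiv ℝ f) := hf.fderiv_right (by simp)
  have h1 : ∀ t : ℝ, HasDerivAt (fun τ : ℝ => f (τ • x)) (fderiv ℝ f (t • x) x) t := by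
    intro t
    have hs : HasDerivAt (fun τ : ℝ => τ • x) x t := by
      simpa using (hasDerivAt_id t).smul_const x
    have := (hf.differentiable (by simp) (t • x)).hasFDerivAt.comp_hasDerivAt t hs
    simpa [Function.comp_def] using this
  have hde : deriv (fun τ : ℝ => f (τ • x)) = fun t => fderiv ℝ f (t • x) x := by
    funext t; exact (h1 t).deriv
  rw [hde]
  have hs : HasDerivAt (fun τ : ℝ => τ • x) x 0 := by
    simpa using (hasDerivAt_id (0:ℝ)).smul_const x
  have h2 : HasDerivAt (fun t : ℝ => fderiv ℝ f (t • x)) (fderiv ℝ (fderiv ℝ f) 0 x) 0 := by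
    have := (hdf.differentiable (by simp) (0 • x)).hasFDerivAt.comp_hasDerivAt 0 hs
    simpa [Function.comp_def] using this
  have h3 : HasDerivAt (fun t : ℝ => fderiv ℝ f (t • x) x) (fderiv ℝ (fderiv ℝ f) 0 x x) 0 := by
    have := (ContinuousLinearMap.apply ℝ ℝ x).hasFDerivAt.comp_hasDerivAt 0 h2
    exact this
  exact h3.deriv


set_option maxHeartbeats 16000000 in
/-- Core curve construction: if `g` is smooth near `0`, vanishes with vanishing
derivative at `0`, its second derivative `A` satisfies `A v v = 0` and `A v u > 0`,
then there is a correction `s t → 0` with `g (t • (v + s t • u)) = 0` near `0`. -/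
lemma curve_core (g : E → ℝ) (hg : ContDiffAt ℝ (⊤ : ℕ∞) g 0) (hg0 : g 0 = 0)
    (hg1 : fderiv ℝ g 0 = 0) (v u : E)
    (hb : 0 < fderiv ℝ (fderiv ℝ g) 0 v u)
    (hvv : fderiv ℝ (fderiv ℝ g) 0 v v = 0) :
    ∃ s : ℝ → ℝ, s 0 = 0 ∧ Tendsto s (𝓝 0) (𝓝 0) ∧ (∀ t, |s t| ≤ 1) ∧
      ∀ᶠ t in 𝓝 (0 : ℝ), g (t • (v + s t • u)) = 0 := by
  classical
  set A := fderiv ℝ (fderiv ℝ g) 0 with hA_def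
  set b := A v u with hb_def
  -- differentiability of g near 0
  have hg2 : ContDiffAt ℝ 2 g 0 := hg.of_le (WithTop.coe_le_coe.2 le_top)
  have hgev : ∀ᶠ x in 𝓝 (0:E), DifferentiableAt ℝ g x := by
    have := (hg.of_le (WithTop.coe_le_coe.2 le_top : (1:WithTop ℕ∞) ≤ ((⊤ : ℕ∞) : WithTop ℕ∞))).eventually (by simp)
    exact this.mono fun x hx => hx.differentiableAt (by simp)
  -- second derivative facts
  have hfd : ContDiffAt ℝ 1 (fderiv ℝ g) 0 := hg.fderiv_right (WithTop.coe_le_coe.2 le_top)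
  have hAd : HasFDerivAt (fderiv ℝ g) A 0 :=
    (hfd.differentiableAt (by simp)).hasFDerivAt
  -- estimates on directional derivatives
  have key : ∀ z : E, ∀ c > (0:ℝ), ∀ᶠ x in 𝓝 (0:E), |fderiv ℝ g x z - A x z| ≤ c * ‖x‖ := by
    intro z c hc
    have h1 : HasFDerivAt (fun x => fderiv ℝ g x z)
        ((ContinuousLinearMap.apply ℝ ℝ z).comp A) 0 :=
      (ContinuousLinearMap.apply ℝ ℝ z).hasFDerivAt.comp 0 hAd
    have h2 := h1.isLittleO.def hc
    simpa [hg1, Real.norm_eq_abs] using h2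
  -- constants
  set M : ℝ := ‖v‖ + ‖u‖ + 1 with hM_def
  have hM : 0 < M := by positivity
  set δ₀ : ℝ := min 1 (b / (4 * (|A u u| + 1))) with hδ₀_def
  have hδ₀pos : 0 < δ₀ := lt_min one_pos (by positivity)
  have hδ₀le1 : δ₀ ≤ 1 := min_le_left _ _
  have hδ₀Auu : δ₀ * |A u u| ≤ b / 4 := by
    have h1 : δ₀ ≤ b / (4 * (|A u u| + 1)) := min_le_right _ _
    have h2 : (0:ℝ) ≤ |A u u| := abs_nonneg _
    have h1' : δ₀ * (4 * (|A u u| + 1)) ≤ b := (le_div_iff₀ (by positivity)).1 h1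
    have h4 : (0:ℝ) < 4 := by norm_num
    rw [le_div_iff₀ h4]
    nlinarith
  set ε₁ : ℝ := b / (4 * M) with hε₁_def
  have hε₁ : 0 < ε₁ := by positivity
  -- good radius
  obtain ⟨r, hr, hball⟩ : ∃ r > 0, ∀ x ∈ Metric.ball (0:E) r,
      DifferentiableAt ℝ g x ∧ |fderiv ℝ g x u - A x u| ≤ ε₁ * ‖x‖ :=
    Metric.eventually_nhds_iff_ball.1 (hgev.and (key u ε₁ hε₁))
  -- norm bound
  have hnorm : ∀ t s : ℝ, |s| ≤ δ₀ → ‖t • (v + s • u)‖ ≤ |t| * M := by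
    intro t s hs
    rw [norm_smul, Real.norm_eq_abs]
    have : ‖v + s • u‖ ≤ M := by
      calc ‖v + s • u‖ ≤ ‖v‖ + ‖s • u‖ := norm_add_le _ _
        _ = ‖v‖ + |s| * ‖u‖ := by rw [norm_smul, Real.norm_eq_abs]
        _ ≤ ‖v‖ + 1 * ‖u‖ := by
            have : |s| ≤ 1 := hs.trans hδ₀le1
            nlinarith [norm_nonneg u]
        _ ≤ M := by simp [hM_def]
    exact mul_le_mul_of_nonneg_left this (abs_nonneg t)
  have hmem : ∀ t s : ℝ, |s| ≤ δ₀ → |t| * M < r → t • (v + s • u) ∈ Metric.ball (0:E) r := by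
    intro t s hs ht
    rw [Metric.mem_ball, dist_zero_right]
    exact lt_of_le_of_lt (hnorm t s hs) ht
  -- derivative in s
  have hderiv : ∀ t s : ℝ, t • (v + s • u) ∈ Metric.ball (0:E) r →
      HasDerivAt (fun σ : ℝ => g (t • (v + σ • u)))
        (t * fderiv ℝ g (t • (v + s • u)) u) s := by
    intro t s hx
    have hin : HasDerivAt (fun σ : ℝ => t • (v + σ • u)) (t • u) s := by
      have h1 : HasDerivAt (fun σ : ℝ => v + σ • u) u s := by
        simpa using ((hasDerivAt_id s).smul_const u).const_add v
      exact h1.const_smul t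
    have := ((hball _ hx).1.hasFDerivAt).comp_hasDerivAt s hin
    simpa [smul_eq_mul, map_smul, Function.comp_def] using this
  -- positivity of the s-derivative
  have hApp : ∀ t s : ℝ, A (t • (v + s • u)) u = t * (b + s * A u u) := by
    intro t s
    have : A (t • (v + s • u)) = t • (A v + s • A u) := by
      rw [map_smul, map_add, map_smul]
    rw [this]
    simp [smul_eq_mul, hb_def]
    ring
  have hpos : ∀ t s : ℝ, t ≠ 0 → |s| ≤ δ₀ → |t| * M < r →
      t ^ 2 * (b / 4) ≤ t * fderiv ℝ g (t • (v + s • u)) u := by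
    intro t s ht0 hs htr
    set x := t • (v + s • u) with hx_def
    have hxball := hmem t s hs htr
    have hest := (hball x hxball).2
    have hxnorm : ‖x‖ ≤ |t| * M := hnorm t s hs
    have h1 : |fderiv ℝ g x u - A x u| ≤ ε₁ * (|t| * M) := by
      refine hest.trans ?_
      have : (0:ℝ) ≤ ε₁ := le_of_lt hε₁
      nlinarith
    have h2 : A x u = t * (b + s * A u u) := hApp t s
    have h3 : t * A x u = t ^ 2 * (b + s * A u u) := by rw [h2]; ring
    have h4 : t ^ 2 * (b + s * A u u) ≥ t ^ 2 * (3 * b / 4) := by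
      have ht2 : (0:ℝ) ≤ t ^ 2 := sq_nonneg t
      have : s * A u u ≥ -(b/4) := by
        have := neg_abs_le (s * A u u)
        have habs : |s * A u u| ≤ δ₀ * |A u u| := by
          rw [abs_mul]
          have := abs_nonneg (A u u)
          nlinarith
        nlinarith
      nlinarith
    have h5 : t * (fderiv ℝ g x u - A x u) ≥ -(t ^ 2 * (b / 2)) := by
      have := abs_mul t (fderiv ℝ g x u - A x u)
      have h6 : |t * (fderiv ℝ g x u - A x u)| ≤ |t| * (ε₁ * (|t| * M)) := by
        rw [abs_mul]
        have := abs_nonneg t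
        nlinarith
      have h7 : |t| * (ε₁ * (|t| * M)) = t ^ 2 * (b / 4) := by
        have habs2 : |t| * |t| = t ^ 2 := by rw [← abs_mul, abs_mul_self]; ring
        have hεM : ε₁ * M = b / 4 := by
          rw [hε₁_def]
          field_simp
        linear_combination (ε₁ * M) * habs2 + t ^ 2 * hεM
      have hna := neg_abs_le (t * (fderiv ℝ g x u - A x u))
      nlinarith [mul_nonneg (sq_nonneg t) hb.le]
    have : t * fderiv ℝ g x u = t * A x u + t * (fderiv ℝ g x u - A x u) := by ring
    rw [this, h3]
    nlinarith
  -- eventual smallness helper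
  have habs_ev : ∀ c : ℝ, 0 < c → ∀ᶠ t in 𝓝 (0:ℝ), |t| < c := by
    intro c hc
    simpa using eventually_abs_sub_lt (0:ℝ) hc
  have hrM_ev : ∀ᶠ t in 𝓝 (0:ℝ), |t| * M < r := by
    filter_upwards [habs_ev (r / M) (by positivity)] with t ht
    exact (lt_div_iff₀ hM).1 ht
  -- strict monotonicity in s
  have hmono : ∀ t : ℝ, t ≠ 0 → |t| * M < r →
      StrictMonoOn (fun σ : ℝ => g (t • (v + σ • u))) (Icc (-δ₀) δ₀) := by
    intro t ht0 htr
    have ht2 : 0 < t ^ 2 := by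
      rcases lt_or_gt_of_ne ht0 with h | h <;> nlinarith
    apply strictMonoOn_of_deriv_pos (convex_Icc _ _)
    · intro σ hσ
      have hσ' : |σ| ≤ δ₀ := abs_le.2 ⟨hσ.1, hσ.2⟩
      exact ((hderiv t σ (hmem t σ hσ' htr)).continuousAt).continuousWithinAt
    · intro σ hσ
      rw [interior_Icc] at hσ
      have hσ' : |σ| ≤ δ₀ := le_of_lt (abs_lt.2 ⟨hσ.1, hσ.2⟩)
      rw [(hderiv t σ (hmem t σ hσ' htr)).deriv]
      have := hpos t σ ht0 hσ' htr
      nlinarith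
  -- smallness of g along the line t • v
  have hsmallline : ∀ δ : ℝ, 0 < δ → ∀ᶠ t in 𝓝 (0:ℝ), |g (t • v)| ≤ δ * b / 8 * t ^ 2 := by
    intro δ hδ
    set ε₂ : ℝ := δ * b / (16 * (‖v‖ + 1)) with hε₂_def
    have hε₂ : 0 < ε₂ := by positivity
    obtain ⟨r₂, hr₂, hball₂⟩ : ∃ r₂ > 0, ∀ x ∈ Metric.ball (0:E) r₂,
        DifferentiableAt ℝ g x ∧ |fderiv ℝ g x v - A x v| ≤ ε₂ * ‖x‖ :=
      Metric.eventually_nhds_iff_ball.1 (hgev.and (key v ε₂ hε₂))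
    filter_upwards [habs_ev (r₂ / (‖v‖ + 1)) (by positivity)] with t ht
    have htv : |t| * (‖v‖ + 1) < r₂ := (lt_div_iff₀ (by positivity)).1 ht
    have hmem₂ : ∀ ξ : ℝ, ξ ∈ Icc (-|t|) |t| → ξ • v ∈ Metric.ball (0:E) r₂ := by
      intro ξ hξ
      have hξabs : |ξ| ≤ |t| := abs_le.2 ⟨hξ.1, hξ.2⟩
      rw [Metric.mem_ball, dist_zero_right, norm_smul, Real.norm_eq_abs]
      nlinarith [norm_nonneg v, abs_nonneg ξ, abs_nonneg t]
    have hC : ∀ ξ ∈ Icc (-|t|) |t|, HasDerivWithinAt (fun τ : ℝ => g (τ • v))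
        (fderiv ℝ g (ξ • v) v) (Icc (-|t|) |t|) ξ := by
      intro ξ hξ
      have hdv : HasDerivAt (fun τ : ℝ => τ • v) v ξ := by
        simpa using (hasDerivAt_id ξ).smul_const v
      have := ((hball₂ _ (hmem₂ ξ hξ)).1.hasFDerivAt).comp_hasDerivAt ξ hdv
      exact this.hasDerivWithinAt
    have hCb : ∀ ξ ∈ Icc (-|t|) |t|, ‖fderiv ℝ g (ξ • v) v‖ ≤ ε₂ * (‖v‖ + 1) * |t| := by
      intro ξ hξ
      have hξabs : |ξ| ≤ |t| := abs_le.2 ⟨hξ.1, hξ.2⟩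
      have h1 := (hball₂ _ (hmem₂ ξ hξ)).2
      have hAxv : A (ξ • v) v = 0 := by
        rw [map_smul]
        simp [smul_eq_mul, hvv]
      rw [hAxv, sub_zero] at h1
      rw [Real.norm_eq_abs]
      have h2 : ‖ξ • v‖ = |ξ| * ‖v‖ := by rw [norm_smul, Real.norm_eq_abs]
      rw [h2] at h1
      have h3 : |ξ| * ‖v‖ ≤ |t| * (‖v‖ + 1) := by
        nlinarith [norm_nonneg v, abs_nonneg ξ, abs_nonneg t]
      calc |fderiv ℝ g (ξ • v) v| ≤ ε₂ * (|ξ| * ‖v‖) := h1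
        _ ≤ ε₂ * (|t| * (‖v‖ + 1)) := mul_le_mul_of_nonneg_left h3 hε₂.le
        _ = ε₂ * (‖v‖ + 1) * |t| := by ring
    have h0mem : (0:ℝ) ∈ Icc (-|t|) |t| := ⟨neg_nonpos.2 (abs_nonneg t), abs_nonneg t⟩
    have htmem : t ∈ Icc (-|t|) |t| := ⟨neg_abs_le t, le_abs_self t⟩
    have hbound := Convex.norm_image_sub_le_of_norm_hasDerivWithin_le hC hCb
      (convex_Icc _ _) h0mem htmem
    have hεv : ε₂ * (‖v‖ + 1) = δ * b / 16 := by
      rw [hε₂_def]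
      field_simp
    rw [zero_smul, hg0, sub_zero, Real.norm_eq_abs, Real.norm_eq_abs, sub_zero] at hbound
    have habs2 : |t| * |t| = t ^ 2 := by rw [← abs_mul, abs_mul_self]; ring
    calc |g (t • v)| ≤ ε₂ * (‖v‖ + 1) * |t| * |t| := hbound
      _ = δ * b / 16 * t ^ 2 := by
          rw [hεv]
          linear_combination (δ * b / 16) * habs2
      _ ≤ δ * b / 8 * t ^ 2 := by
          nlinarith [mul_nonneg (mul_nonneg hδ.le hb.le) (sq_nonneg t)]
  -- existence of roots at every scale δ
  have hroots : ∀ δ : ℝ, 0 < δ → δ ≤ δ₀ → ∀ᶠ t in 𝓝[≠] (0:ℝ),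
      ∃ σ ∈ Ioo (-δ) δ, g (t • (v + σ • u)) = 0 := by
    intro δ hδ hδle
    filter_upwards [(hrM_ev.and (hsmallline δ hδ)).filter_mono nhdsWithin_le_nhds,
      self_mem_nhdsWithin] with t hth ht0'
    obtain ⟨htr, hsm⟩ := hth
    have ht0 : t ≠ 0 := ht0'
    have ht2 : 0 < t ^ 2 := by
      rcases lt_or_gt_of_ne ht0 with h | h <;> nlinarith
    have hsub : ∀ σ : ℝ, σ ∈ Icc (-δ) δ → |σ| ≤ δ₀ :=
      fun σ hσ => (abs_le.2 ⟨hσ.1, hσ.2⟩).trans hδle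
    have hcont : ContinuousOn (fun σ : ℝ => g (t • (v + σ • u))) (Icc (-δ) δ) :=
      fun σ hσ => ((hderiv t σ (hmem t σ (hsub σ hσ) htr)).continuousAt).continuousWithinAt
    have hψ0 : g (t • (v + (0:ℝ) • u)) = g (t • v) := by norm_num
    -- upper endpoint
    obtain ⟨ξ, hξmem, hslope⟩ := exists_hasDerivAt_eq_slope
      (fun σ : ℝ => g (t • (v + σ • u)))
      (fun σ : ℝ => t * fderiv ℝ g (t • (v + σ • u)) u) hδ
      (hcont.mono (Icc_subset_Icc (by linarith) le_rfl))
      (fun σ hσ => hderiv t σ (hmem t σ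
        (by
          have : |σ| ≤ δ := le_of_lt (abs_lt.2 ⟨by linarith [hσ.1], hσ.2⟩)
          exact this.trans hδle) htr))
    have hξabs : |ξ| ≤ δ₀ := by
      have : |ξ| ≤ δ := le_of_lt (abs_lt.2 ⟨by linarith [hξmem.1], hξmem.2⟩)
      exact this.trans hδle
    have hpξ := hpos t ξ ht0 hξabs htr
    rw [sub_zero] at hslope
    have heq1 : g (t • (v + δ • u)) - g (t • (v + (0:ℝ) • u))
        = t * fderiv ℝ g (t • (v + ξ • u)) u * δ := (div_eq_iff (ne_of_gt hδ)).1 hslope.symm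
    have hupper : 0 < g (t • (v + δ • u)) := by
      rw [hψ0] at heq1
      have habs := neg_abs_le (g (t • v))
      have hmul := mul_le_mul_of_nonneg_left hpξ (le_of_lt hδ)
      nlinarith [mul_pos (mul_pos hδ hb) ht2]
    -- lower endpoint
    obtain ⟨ξ', hξmem', hslope'⟩ := exists_hasDerivAt_eq_slope
      (fun σ : ℝ => g (t • (v + σ • u)))
      (fun σ : ℝ => t * fderiv ℝ g (t • (v + σ • u)) u)
      (show -δ < (0:ℝ) by linarith)
      (hcont.mono (Icc_subset_Icc le_rfl (by linarith)))
      (fun σ hσ => hderiv t σ (hmem t σ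
        (by
          have : |σ| ≤ δ := le_of_lt (abs_lt.2 ⟨hσ.1, by linarith [hσ.2]⟩)
          exact this.trans hδle) htr))
    have hξabs' : |ξ'| ≤ δ₀ := by
      have : |ξ'| ≤ δ := le_of_lt (abs_lt.2 ⟨hξmem'.1, by linarith [hξmem'.2]⟩)
      exact this.trans hδle
    have hpξ' := hpos t ξ' ht0 hξabs' htr
    have hden : (0:ℝ) - -δ = δ := by ring
    rw [hden] at hslope'
    have heq2 : g (t • (v + (0:ℝ) • u)) - g (t • (v + (-δ) • u))
        = t * fderiv ℝ g (t • (v + ξ' • u)) u * δ := (div_eq_iff (ne_of_gt hδ)).1 hslope'.symm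
    have hlower : g (t • (v + (-δ) • u)) < 0 := by
      rw [hψ0] at heq2
      have habs := le_abs_self (g (t • v))
      have hmul := mul_le_mul_of_nonneg_left hpξ' (le_of_lt hδ)
      nlinarith [mul_pos (mul_pos hδ hb) ht2]
    have hivt := intermediate_value_Ioo (show -δ ≤ δ by linarith) hcont
    obtain ⟨σ, hσmem, hσval⟩ := hivt (show (0:ℝ) ∈ Ioo (g (t • (v + (-δ) • u)))
      (g (t • (v + δ • u))) from ⟨hlower, hupper⟩)
    exact ⟨σ, hσmem, hσval⟩
  -- definition of the correction function s
  set S : ℝ → ℝ := fun t => if t = 0 then 0 else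
    if h : ∃ σ, |σ| ≤ δ₀ ∧ g (t • (v + σ • u)) = 0 then h.choose else 0 with hS_def
  have hS0 : S 0 = 0 := by simp [hS_def]
  have hSspec : ∀ t : ℝ, t ≠ 0 → (∃ σ, |σ| ≤ δ₀ ∧ g (t • (v + σ • u)) = 0) →
      |S t| ≤ δ₀ ∧ g (t • (v + S t • u)) = 0 := by
    intro t ht hex
    simp only [hS_def, if_neg ht, dif_pos hex]
    exact ⟨hex.choose_spec.1, hex.choose_spec.2⟩
  have hSbound : ∀ t : ℝ, |S t| ≤ δ₀ := by
    intro t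
    by_cases h0 : t = 0
    · simp [h0, hS0, le_of_lt hδ₀pos]
    · by_cases hex : ∃ σ, |σ| ≤ δ₀ ∧ g (t • (v + σ • u)) = 0
      · exact (hSspec t h0 hex).1
      · simp only [hS_def]
        rw [if_neg h0, dif_neg hex]
        simpa using le_of_lt hδ₀pos
  -- uniqueness of roots
  have huniq : ∀ t : ℝ, t ≠ 0 → |t| * M < r → ∀ σ₁ σ₂ : ℝ, |σ₁| ≤ δ₀ → |σ₂| ≤ δ₀ →
      g (t • (v + σ₁ • u)) = 0 → g (t • (v + σ₂ • u)) = 0 → σ₁ = σ₂ := by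
    intro t ht0 htr σ₁ σ₂ h1 h2 hz1 hz2
    have m1 : σ₁ ∈ Icc (-δ₀) δ₀ := abs_le.1 h1
    have m2 : σ₂ ∈ Icc (-δ₀) δ₀ := abs_le.1 h2
    exact (hmono t ht0 htr).injOn m1 m2 (by rw [hz1, hz2])
  -- smallness of S
  have hSsmall : ∀ δ : ℝ, 0 < δ → δ ≤ δ₀ → ∀ᶠ t in 𝓝[≠] (0:ℝ), |S t| < δ := by
    intro δ hδ hδle
    filter_upwards [hroots δ hδ hδle, hrM_ev.filter_mono nhdsWithin_le_nhds,
      self_mem_nhdsWithin] with t hex htr ht0'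
    have ht0 : t ≠ 0 := ht0'
    obtain ⟨σ, hσmem, hσz⟩ := hex
    have hσδ : |σ| < δ := abs_lt.2 ⟨hσmem.1, hσmem.2⟩
    have hσδ₀ : |σ| ≤ δ₀ := (le_of_lt hσδ).trans hδle
    have hspec := hSspec t ht0 ⟨σ, hσδ₀, hσz⟩
    have : S t = σ := huniq t ht0 htr (S t) σ (hSbound t) hσδ₀ hspec.2 hσz
    rwa [this]
  -- S tends to 0
  have hTend : Tendsto S (𝓝 0) (𝓝 0) := by
    rw [Metric.tendsto_nhds]
    intro ε hε
    have h1 := hSsmall (min δ₀ ε) (lt_min hδ₀pos hε) (min_le_left _ _)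
    rw [eventually_nhdsWithin_iff] at h1
    filter_upwards [h1] with t ht
    rw [Real.dist_eq, sub_zero]
    by_cases h0 : t = 0
    · simp [h0, hS0, hε]
    · have := ht (by simpa using h0)
      exact lt_of_lt_of_le this (min_le_right _ _)
  -- eventual vanishing
  have hfin : ∀ᶠ t in 𝓝 (0:ℝ), g (t • (v + S t • u)) = 0 := by
    have h1 : ∀ᶠ t in 𝓝[≠] (0:ℝ), g (t • (v + S t • u)) = 0 := by
      filter_upwards [hroots δ₀ hδ₀pos le_rfl, self_mem_nhdsWithin] with t hex ht0'
      have ht0 : t ≠ 0 := ht0'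
      obtain ⟨σ, hσmem, hσz⟩ := hex
      have hσδ₀ : |σ| ≤ δ₀ := le_of_lt (abs_lt.2 ⟨hσmem.1, hσmem.2⟩)
      exact (hSspec t ht0 ⟨σ, hσδ₀, hσz⟩).2
    rw [eventually_nhdsWithin_iff] at h1
    filter_upwards [h1] with t ht
    by_cases h0 : t = 0
    · simp [h0, hg0]
    · exact ht (by simpa using h0)
  exact ⟨S, hS0, hTend, fun t => (hSbound t).trans hδ₀le1, hfin⟩


end Auxiliary

open Set

set_option maxHeartbeats 4000000 in
/-- Lemma A.2 of the paper. Under the same hypotheses as Lemma A.1,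
any `w` with `DN̂(0)w = 0` splits as `w = w₁ + w₂` with `DN̂(0)wᵢ = 0` and
`D²N¹(0)[wᵢ,wᵢ] = 0`, and each `wᵢ` is the derivative at `0` of a path `γᵢ` with
`γᵢ(0) = 0` along which `N` vanishes identically. -/
theorem statement1
    {E : Type*} [NormedAddCommGroup E] [NormedSpace ℝ E] [CompleteSpace E]
    {n : ℕ} (hn : 1 ≤ n)
    (N1 : E → ℝ) (Nhat : E → Fin (n - 1) → ℝ)
    (hN1smooth : ContDiff ℝ (⊤ : ℕ∞) N1) (hNhatsmooth : ContDiff ℝ (⊤ : ℕ∞) Nhat)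
    (hN10 : N1 0 = 0) (hNhat0 : Nhat 0 = 0)
    (hsurj : Function.Surjective (fderiv ℝ Nhat 0))
    (hD1 : fderiv ℝ N1 0 = 0)
    (wp wm : E)
    (hwp2 : deriv (deriv (fun t : ℝ => N1 (t • wp))) 0 = 1)
    (hwm2 : deriv (deriv (fun t : ℝ => N1 (t • wm))) 0 = -1)
    (hwpker : fderiv ℝ Nhat 0 wp = 0) (hwmker : fderiv ℝ Nhat 0 wm = 0)
    (w : E)
    (hwker : fderiv ℝ Nhat 0 w = 0) :
    ∃ w₁ w₂ : E, w = w₁ + w₂ ∧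
      fderiv ℝ Nhat 0 w₁ = 0 ∧ fderiv ℝ Nhat 0 w₂ = 0 ∧
      deriv (deriv (fun t : ℝ => N1 (t • w₁))) 0 = 0 ∧
      deriv (deriv (fun t : ℝ => N1 (t • w₂))) 0 = 0 ∧
      ∃ ε > (0 : ℝ), ∃ γ₁ γ₂ : ℝ → E,
        γ₁ 0 = 0 ∧ γ₂ 0 = 0 ∧
        HasDerivAt γ₁ w₁ 0 ∧ HasDerivAt γ₂ w₂ 0 ∧
        (∀ t ∈ Ioo (-ε) ε, N1 (γ₁ t) = 0 ∧ Nhat (γ₁ t) = 0) ∧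
        (∀ t ∈ Ioo (-ε) ε, N1 (γ₂ t) = 0 ∧ Nhat (γ₂ t) = 0) := by
  classical
  set L := fderiv ℝ Nhat 0 with hL_def
  -- a continuous right inverse of L
  obtain ⟨R₀, hR₀⟩ := (L : E →ₗ[ℝ] (Fin (n-1) → ℝ)).exists_rightInverse_of_surjective
    (LinearMap.range_eq_top.2 hsurj)
  set R : (Fin (n-1) → ℝ) →L[ℝ] E := LinearMap.toContinuousLinearMap R₀ with hR_def
  have hLR : ∀ y, L (R y) = y := by
    intro y
    have := LinearMap.ext_iff.1 hR₀ y
    exact this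
  -- the chart map
  set Φ : E → E := fun x => x + R (Nhat x) - R (L x) with hΦ_def
  have hΦsmooth : ContDiff ℝ (⊤ : ℕ∞) Φ :=
    (contDiff_id.add (R.contDiff.comp hNhatsmooth)).sub ((R.comp L).contDiff)
  have hΦ0 : Φ 0 = 0 := by simp [hΦ_def, hNhat0]
  have hLΦ : ∀ x, L (Φ x) = Nhat x := by
    intro x
    simp [hΦ_def, map_add, map_sub, hLR]
  have hdΦ : HasFDerivAt Φ ((ContinuousLinearEquiv.refl ℝ E :
      E ≃L[ℝ] E) : E →L[ℝ] E) 0 := by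
    have h1 : HasFDerivAt (fun x => R (Nhat x)) (R.comp L) 0 :=
      R.hasFDerivAt.comp 0 (hNhatsmooth.differentiable (by simp) 0).hasFDerivAt
    have h2 : HasFDerivAt (fun x : E => x) (ContinuousLinearMap.id ℝ E) 0 := hasFDerivAt_id 0
    have h3 := (h2.add h1).sub ((R.comp L).hasFDerivAt)
    have : ContinuousLinearMap.id ℝ E + R.comp L - R.comp L = ContinuousLinearMap.id ℝ E := by
      simp
    rw [this] at h3
    exact h3
  have hΦat : ContDiffAt ℝ (⊤ : ℕ∞) Φ 0 := hΦsmooth.contDiffAt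
  have hstrict : HasStrictFDerivAt Φ ((ContinuousLinearEquiv.refl ℝ E :
      E ≃L[ℝ] E) : E →L[ℝ] E) 0 := hΦat.hasStrictFDerivAt' hdΦ (by simp)
  set σ : E → E := hΦat.localInverse hdΦ (by simp) with hσ_def
  have hσ0 : σ 0 = 0 := by
    have := hΦat.localInverse_apply_image (f' := ContinuousLinearEquiv.refl ℝ E) hdΦ (by simp)
    rwa [hΦ0] at this
  have hσsmooth : ContDiffAt ℝ (⊤ : ℕ∞) σ 0 := by
    have := hΦat.to_localInverse (f' := ContinuousLinearEquiv.refl ℝ E) hdΦ (by simp)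
    rwa [hΦ0] at this
  have hright : ∀ᶠ y in 𝓝 (0:E), Φ (σ y) = y := by
    have := hstrict.eventually_right_inverse
    rwa [hΦ0] at this
  have hNσ : ∀ᶠ y in 𝓝 (0:E), Nhat (σ y) = L y := by
    filter_upwards [hright] with y hy
    rw [← hLΦ (σ y), hy]
  have hσderiv : HasFDerivAt σ (ContinuousLinearMap.id ℝ E) 0 := by
    have h := hstrict.to_localInverse
    rw [hΦ0] at h
    have h2 := h.hasFDerivAt
    exact h2
  -- the reduced function
  set g : E → ℝ := fun y => N1 (σ y) with hg_def
  have hgAt : ContDiffAt ℝ (⊤ : ℕ∞) g 0 := by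
    have h1 : ContDiffAt ℝ (⊤ : ℕ∞) N1 (σ 0) := hN1smooth.contDiffAt
    exact h1.comp 0 hσsmooth
  have hg0 : g 0 = 0 := by simp [hg_def, hσ0, hN10]
  have hgderiv0 : fderiv ℝ g 0 = 0 := by
    have hN1d : HasFDerivAt N1 (fderiv ℝ N1 0) (σ 0) := by
      rw [hσ0]
      exact (hN1smooth.differentiable (by simp) 0).hasFDerivAt
    have h1 : HasFDerivAt g ((fderiv ℝ N1 0).comp (ContinuousLinearMap.id ℝ E)) 0 :=
      hN1d.comp 0 hσderiv
    rw [h1.fderiv]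
    simp [hD1]
  -- the second derivative of N1
  set A1 := fderiv ℝ (fderiv ℝ N1) 0 with hA1_def
  have hA1d : ContDiff ℝ (⊤ : ℕ∞) (fderiv ℝ N1) := hN1smooth.fderiv_right (by simp)
  -- transfer: the second derivative of g is also A1
  have hAA : fderiv ℝ (fderiv ℝ g) 0 = A1 := by
    have hσev : ∀ᶠ y in 𝓝 (0:E), DifferentiableAt ℝ σ y := by
      have := (hσsmooth.of_le (WithTop.coe_le_coe.2 le_top : (1 : WithTop ℕ∞) ≤ ((⊤ : ℕ∞) : WithTop ℕ∞))).eventually (by simp)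
      exact this.mono fun y hy => hy.differentiableAt (by simp)
    have hfev : fderiv ℝ g =ᶠ[𝓝 (0:E)]
        fun y => (fderiv ℝ N1 (σ y)).comp (fderiv ℝ σ y) := by
      filter_upwards [hσev] with y hy
      exact fderiv_comp y (hN1smooth.differentiable (by simp) (σ y)) hy
    have hc : HasFDerivAt (fun y => fderiv ℝ N1 (σ y)) A1 0 := by
      have h1 : HasFDerivAt (fderiv ℝ N1) A1 (σ 0) := by
        rw [hσ0]
        exact (hA1d.differentiable (by simp) 0).hasFDerivAt
      have := h1.comp 0 hσderiv
      simpa [Function.comp_def] using this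
    have hd : HasFDerivAt (fderiv ℝ σ) (fderiv ℝ (fderiv ℝ σ) 0) 0 :=
      ((hσsmooth.fderiv_right (m := 1) (WithTop.coe_le_coe.2 le_top)).differentiableAt (by simp)).hasFDerivAt
    have hcomp := hc.clm_comp hd
    rw [hfev.fderiv_eq, hcomp.fderiv]
    ext ξ η
    have hσf : fderiv ℝ σ 0 = ContinuousLinearMap.id ℝ E := hσderiv.fderiv
    simp [hσ0, hD1, hσf]
  -- identify the quadratic form in the statement with A1
  have hQ : ∀ x : E, deriv (deriv (fun t : ℝ => N1 (t • x))) 0 = A1 x x :=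
    fun x => quad_rep N1 hN1smooth x
  have hsymm : ∀ x y : E, A1 x y = A1 y x := by
    intro x y
    exact second_derivative_symmetric
      (fun z => (hN1smooth.differentiable (by simp) z).hasFDerivAt)
      ((hA1d.differentiable (by simp) 0).hasFDerivAt) x y
  -- curve construction wrapper
  have curveW : ∀ z : E, L z = 0 → A1 z z = 0 →
      (z = 0 ∨ ∃ u : E, L u = 0 ∧ A1 z u ≠ 0) →
      ∃ ε > (0:ℝ), ∃ γ : ℝ → E, γ 0 = 0 ∧ HasDerivAt γ z 0 ∧
        ∀ t ∈ Ioo (-ε) ε, N1 (γ t) = 0 ∧ Nhat (γ t) = 0 := by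
    intro z hzker hzz hcase
    rcases hcase with rfl | ⟨u, huker, hzu⟩
    · refine ⟨1, one_pos, fun _ => 0, rfl, ?_, fun t _ => ⟨hN10, hNhat0⟩⟩
      simpa using hasDerivAt_const (0:ℝ) (0:E)
    · set u' : E := if 0 < A1 z u then u else -u with hu'_def
      have hu'ker : L u' = 0 := by
        by_cases h : 0 < A1 z u
        · simp [hu'_def, h, huker]
        · simp [hu'_def, h, huker]
      have hbpos : 0 < fderiv ℝ (fderiv ℝ g) 0 z u' := by
        rw [hAA]
        by_cases h : 0 < A1 z u
        · simpa [hu'_def, h] using h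
        · have h1 : A1 z u < 0 := lt_of_le_of_ne (not_lt.1 h) hzu
          simp only [hu'_def, if_neg h, map_neg]
          linarith
      have hzz' : fderiv ℝ (fderiv ℝ g) 0 z z = 0 := by rw [hAA]; exact hzz
      obtain ⟨s, hs0, hsT, hsB, hsroot⟩ := curve_core g hgAt hg0 hgderiv0 z u' hbpos hzz'
      set c : ℝ → E := fun t => t • (z + s t • u') with hc_def
      have hc0 : c 0 = 0 := by simp [hc_def]
      have hf1 : HasDerivAt (fun t : ℝ => (t * s t) • u') 0 0 := by
        rw [hasDerivAt_iff_tendsto_slope]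
        have hcongr : (fun t : ℝ => s t • u') =ᶠ[𝓝[≠] (0:ℝ)]
            slope (fun t : ℝ => (t * s t) • u') 0 := by
          filter_upwards [self_mem_nhdsWithin] with t ht
          have ht0 : t ≠ 0 := ht
          rw [slope_def_module]
          rw [sub_zero, zero_mul, zero_smul, sub_zero, smul_smul]
          congr 1
          field_simp
        have hT : Tendsto (fun t : ℝ => s t • u') (𝓝[≠] 0) (𝓝 (0:E)) := by
          have h2 := hsT.smul_const u'
          rw [zero_smul] at h2
          exact h2.mono_left nhdsWithin_le_nhds
        exact hT.congr' hcongr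
      have hcd : HasDerivAt c z 0 := by
        have hrw : c = fun t : ℝ => t • z + (t * s t) • u' := by
          funext t
          simp [hc_def, smul_add, smul_smul]
        rw [hrw]
        have h1 : HasDerivAt (fun t : ℝ => t • z) z 0 := by
          simpa using (hasDerivAt_id (0:ℝ)).smul_const z
        have := h1.add hf1
        rw [add_zero] at this
        exact this
      set γ : ℝ → E := fun t => σ (c t) with hγ_def
      have hγ0 : γ 0 = 0 := by simp [hγ_def, hc0, hσ0]
      have hγd : HasDerivAt γ z 0 := by
        have hσd : HasFDerivAt σ (ContinuousLinearMap.id ℝ E) (c 0) := by rwa [hc0]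
        have h2 := hσd.comp_hasDerivAt 0 hcd
        simpa [Function.comp_def] using h2
      have hctend : Tendsto c (𝓝 0) (𝓝 (0:E)) := by
        have h2 := hcd.continuousAt
        rwa [ContinuousAt, hc0] at h2
      have hNγ : ∀ᶠ t in 𝓝 (0:ℝ), Nhat (γ t) = 0 := by
        filter_upwards [hctend.eventually hNσ] with t ht
        show Nhat (σ (c t)) = 0
        rw [ht]
        simp [hc_def, map_smul, map_add, hzker, hu'ker]
      have hN1γ : ∀ᶠ t in 𝓝 (0:ℝ), N1 (γ t) = 0 := by
        filter_upwards [hsroot] with t ht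
        show N1 (σ (c t)) = 0
        exact ht
      obtain ⟨ε, hε, hballs⟩ := Metric.eventually_nhds_iff_ball.1 (hN1γ.and hNγ)
      refine ⟨ε, hε, γ, hγ0, hγd, ?_⟩
      intro t ht
      have htb : t ∈ Metric.ball (0:ℝ) ε := by
        rw [Metric.mem_ball, Real.dist_eq, sub_zero]
        exact abs_lt.2 ⟨ht.1, ht.2⟩
      exact hballs t htb
  -- quadratic algebra
  have hwpQ : A1 wp wp = 1 := by rw [← hQ wp]; exact hwp2
  have hwmQ : A1 wm wm = -1 := by rw [← hQ wm]; exact hwm2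
  have hmp : A1 wm wp = A1 wp wm := hsymm wm wp
  set sq : ℝ := Real.sqrt ((A1 wp wm)^2 + 1) with hsq_def
  have hs2 : sq^2 = (A1 wp wm)^2 + 1 := Real.sq_sqrt (by positivity)
  set τ₁ : ℝ := A1 wp wm + sq with hτ₁_def
  set τ₂ : ℝ := A1 wp wm - sq with hτ₂_def
  set zm : E := wp + τ₁ • wm with hzm_def
  set q : ℝ := 2 + 2*(A1 wp wm)^2 with hq_def
  have hqpos : 0 < q := by positivity
  set zp : E := (1/q) • (wp + τ₂ • wm) with hzp_def
  have hzmker : L zm = 0 := by simp [hzm_def, map_add, map_smul, hwpker, hwmker]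
  have hzpker : L zp = 0 := by simp [hzp_def, map_add, map_smul, hwpker, hwmker]
  have hBexp : ∀ (x y : E) (a b : ℝ), A1 (x + a • y) (x + b • y)
      = A1 x x + b * A1 x y + a * A1 y x + a * b * A1 y y := by
    intro x y a b
    simp [map_add, map_smul, smul_eq_mul]
    ring
  have hBzmzm : A1 zm zm = 0 := by
    rw [hzm_def, hBexp, hwpQ, hwmQ, hmp, hτ₁_def]
    linear_combination -hs2
  have hBzp'zp' : A1 (wp + τ₂ • wm) (wp + τ₂ • wm) = 0 := by
    rw [hBexp, hwpQ, hwmQ, hmp, hτ₂_def]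
    linear_combination -hs2
  have hBzp'zm : A1 (wp + τ₂ • wm) zm = q := by
    rw [hzm_def, hBexp, hwpQ, hwmQ, hmp, hτ₂_def, hτ₁_def, hq_def]
    linear_combination hs2
  have hBzpzm : A1 zp zm = 1 := by
    rw [hzp_def, map_smul]
    simp only [ContinuousLinearMap.coe_smul', Pi.smul_apply, smul_eq_mul]
    rw [hBzp'zm]
    field_simp
  have hBzpzp : A1 zp zp = 0 := by
    rw [hzp_def]
    simp only [map_smul, ContinuousLinearMap.coe_smul', Pi.smul_apply,
      ContinuousLinearMap.map_smul_of_tower, smul_eq_mul]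
    rw [hBzp'zp']
    ring
  have hBzmzp : A1 zm zp = 1 := by rw [hsymm zm zp]; exact hBzpzm
  have hzpw : A1 zp w = A1 w zp := hsymm zp w
  have hzmw : A1 zm w = A1 w zm := hsymm zm w
  -- master expansion lemmas
  have hmaster : ∀ α β γ' : ℝ, A1 (α•w + β•zp + γ'•zm) (α•w + β•zp + γ'•zm)
      = α^2 * A1 w w + 2*α*β*(A1 w zp) + 2*α*γ'*(A1 w zm) + 2*β*γ' := by
    intro α β γ'
    simp only [map_add, map_smul, ContinuousLinearMap.add_apply,
      ContinuousLinearMap.coe_smul', Pi.smul_apply, smul_eq_mul]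
    rw [hBzpzp, hBzmzm, hBzpzm, hBzmzp, hzpw, hzmw]
    ring
  have hvzp : ∀ α β γ' : ℝ, A1 (α•w + β•zp + γ'•zm) zp = α * A1 w zp + γ' := by
    intro α β γ'
    simp only [map_add, map_smul, ContinuousLinearMap.add_apply,
      ContinuousLinearMap.coe_smul', Pi.smul_apply, smul_eq_mul]
    rw [hBzpzp, hBzmzp]
    ring
  have hvzm : ∀ α β γ' : ℝ, A1 (α•w + β•zp + γ'•zm) zm = α * A1 w zm + β := by
    intro α β γ'
    simp only [map_add, map_smul, ContinuousLinearMap.add_apply,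
      ContinuousLinearMap.coe_smul', Pi.smul_apply, smul_eq_mul]
    rw [hBzpzm, hBzmzm]
    ring
  have hker3 : ∀ α β γ' : ℝ, L (α•w + β•zp + γ'•zm) = 0 := by
    intro α β γ'
    simp [map_add, map_smul, hwker, hzpker, hzmker]
  -- the splitting
  obtain ⟨w₁, w₂, hsum, hk1, hk2, hq1, hq2, hd1, hd2⟩ :
      ∃ w₁ w₂ : E, w = w₁ + w₂ ∧ L w₁ = 0 ∧ L w₂ = 0 ∧ A1 w₁ w₁ = 0 ∧ A1 w₂ w₂ = 0 ∧
        (w₁ = 0 ∨ ∃ u, L u = 0 ∧ A1 w₁ u ≠ 0) ∧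
        (w₂ = 0 ∨ ∃ u, L u = 0 ∧ A1 w₂ u ≠ 0) := by
    by_cases hb0 : A1 w zp ≠ 0
    · -- case 1
      set β : ℝ := A1 w w / (2 * A1 w zp) with hβ_def
      refine ⟨(0:ℝ)•w + β•zp + (0:ℝ)•zm, (1:ℝ)•w + (-β)•zp + (0:ℝ)•zm, by module,
        hker3 _ _ _, hker3 _ _ _, ?_, ?_, ?_, ?_⟩
      · rw [hmaster]; ring
      · rw [hmaster, hβ_def]; field_simp; ring
      · by_cases hc0 : A1 w w = 0
        · left
          simp [hβ_def, hc0]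
        · right
          exact ⟨zm, hzmker, by rw [hvzm]; simpa [hβ_def] using div_ne_zero hc0 (by simpa using hb0)⟩
      · right
        exact ⟨zp, hzpker, by rw [hvzp]; simpa using hb0⟩
    · push_neg at hb0
      by_cases ha0 : A1 w zm ≠ 0
      · -- case 2
        set β : ℝ := A1 w w / (2 * A1 w zm) with hβ_def
        refine ⟨(0:ℝ)•w + (0:ℝ)•zp + β•zm, (1:ℝ)•w + (0:ℝ)•zp + (-β)•zm, by module,
          hker3 _ _ _, hker3 _ _ _, ?_, ?_, ?_, ?_⟩
        · rw [hmaster]; ring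
        · rw [hmaster, hβ_def]; field_simp; ring
        · by_cases hc0 : A1 w w = 0
          · left
            simp [hβ_def, hc0]
          · right
            exact ⟨zp, hzpker, by rw [hvzp]; simpa [hβ_def] using div_ne_zero hc0 (by simpa using ha0)⟩
        · right
          exact ⟨zm, hzmker, by rw [hvzm]; simpa using ha0⟩
      · push_neg at ha0
        by_cases hc0 : A1 w w = 0
        · -- case 3
          refine ⟨(1:ℝ)•w + (1:ℝ)•zp + (0:ℝ)•zm, (0:ℝ)•w + (-1:ℝ)•zp + (0:ℝ)•zm, by module,
            hker3 _ _ _, hker3 _ _ _, ?_, ?_, ?_, ?_⟩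
          · rw [hmaster, hb0, hc0]; ring
          · rw [hmaster]; ring
          · right
            refine ⟨zm, hzmker, ?_⟩
            rw [hvzm, ha0]
            norm_num
          · right
            refine ⟨zm, hzmker, ?_⟩
            rw [hvzm, ha0]
            norm_num
        · -- case 4
          refine ⟨(1/2:ℝ)•w + (1:ℝ)•zp + (-(A1 w w)/8)•zm,
            (1/2:ℝ)•w + (-1:ℝ)•zp + ((A1 w w)/8)•zm, by module,
            hker3 _ _ _, hker3 _ _ _, ?_, ?_, ?_, ?_⟩
          · rw [hmaster, hb0, ha0]; ring
          · rw [hmaster, hb0, ha0]; ring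
          · right
            refine ⟨zp, hzpker, ?_⟩
            rw [hvzp, hb0]
            intro hcontra
            apply hc0
            linarith
          · right
            refine ⟨zp, hzpker, ?_⟩
            rw [hvzp, hb0]
            intro hcontra
            apply hc0
            linarith
  -- assemble
  obtain ⟨ε₁, hε₁, γ₁, hγ₁0, hγ₁d, hγ₁z⟩ := curveW w₁ hk1 hq1 hd1
  obtain ⟨ε₂, hε₂, γ₂, hγ₂0, hγ₂d, hγ₂z⟩ := curveW w₂ hk2 hq2 hd2
  refine ⟨w₁, w₂, hsum, hk1, hk2, by rw [hQ w₁]; exact hq1, by rw [hQ w₂]; exact hq2,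
    min ε₁ ε₂, lt_min hε₁ hε₂, γ₁, γ₂, hγ₁0, hγ₂0, hγ₁d, hγ₂d, ?_, ?_⟩
  · intro t ht
    exact hγ₁z t ⟨lt_of_le_of_lt (neg_le_neg (min_le_left _ _)) ht.1,
      lt_of_lt_of_le ht.2 (min_le_left _ _)⟩
  · intro t ht
    exact hγ₂z t ⟨lt_of_le_of_lt (neg_le_neg (min_le_right _ _)) ht.1,
      lt_of_lt_of_le ht.2 (min_le_right _ _)⟩
end

section
/- Let λ ∈ ℝ and let ν be a symmetric 2×2 real matrix. For a symmetric positive definite 2×2 matrix G set J(G) := √(det G) · J₀ · G⁻¹ where J₀ = [[0,−1],[1,0]]. Then the derivative at t = 0 of the map t ↦ J₀ᵗ · J(e^{2λ}·I₂ + t·ν) equals −e^{−2λ}·ν⁰, where ν⁰ := ν − (tr ν / 2)·I₂ is the trace-free part of ν. -/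
open Matrix

/-- The standard rotation matrix `J₀ = [[0,−1],[1,0]]`. -/
def J0 : Matrix (Fin 2) (Fin 2) ℝ := !![0, -1; 1, 0]

/-- The matrix `J(G) = √(det G) · J₀ · G⁻¹` of the Hodge star operator of the
metric `G` acting on `1`-forms. -/
noncomputable def hodgeJ (G : Matrix (Fin 2) (Fin 2) ℝ) : Matrix (Fin 2) (Fin 2) ℝ :=
  Real.sqrt G.det • (J0 * G⁻¹)

/-- The trace-free part `ν⁰ = ν − (tr ν / 2)·I₂` of a `2 × 2` matrix. -/
noncomputable def traceFree (ν : Matrix (Fin 2) (Fin 2) ℝ) : Matrix (Fin 2) (Fin 2) ℝ :=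
  ν - (ν.trace / 2) • 1

/-! Since `J₀ᵀ J₀ = 1`, we have `J₀ᵀ J(G) = (√det G)⁻¹ · adj G`. For `2 × 2` matrices the
adjugate is linear, `adj ν = tr ν · 1 - ν`, and `det (a·1 + tν) = a² + t·a·tr ν + t² det ν`, so
differentiating the product at `t = 0` with `a = e^{2λ}` gives
`(-tr ν / (2a)) · 1 + (tr ν · 1 - ν) / a = -ν⁰ / a`. -/

theorem Matrix.adjugate_fin_two_eq_trace_smul_one_sub {R : Type*} [CommRing R]
    (A : Matrix (Fin 2) (Fin 2) R) : A.adjugate = A.trace • 1 - A := by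
  ext i j
  fin_cases i <;> fin_cases j <;> simp [adjugate_fin_two, trace_fin_two]

theorem Matrix.det_fin_two_smul_one_add_smul {R : Type*} [CommRing R] (a t : R)
    (ν : Matrix (Fin 2) (Fin 2) R) :
    (a • (1 : Matrix (Fin 2) (Fin 2) R) + t • ν).det =
      a ^ 2 + t * (a * ν.trace) + t ^ 2 * ν.det := by
  simp only [det_fin_two, trace_fin_two, add_apply, smul_apply, one_apply_eq,
    one_apply_ne Fin.zero_ne_one, one_apply_ne Fin.zero_ne_one.symm, smul_eq_mul]
  ring

theorem Matrix.adjugate_fin_two_smul_one_add_smul {R : Type*} [CommRing R] (a t : R)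
    (ν : Matrix (Fin 2) (Fin 2) R) :
    (a • (1 : Matrix (Fin 2) (Fin 2) R) + t • ν).adjugate = a • 1 + t • ν.adjugate := by
  simp only [adjugate_fin_two_eq_trace_smul_one_sub, trace_add, trace_smul, trace_one,
    Fintype.card_fin, smul_sub, smul_smul]
  module

theorem J0_transpose_mul_J0 : J0ᵀ * J0 = 1 := by
  ext i j
  fin_cases i <;> fin_cases j <;> simp [J0, Matrix.mul_apply]

theorem J0_transpose_mul_hodgeJ (G : Matrix (Fin 2) (Fin 2) ℝ) :
    J0ᵀ * hodgeJ G = (√G.det)⁻¹ • G.adjugate := by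
  rw [hodgeJ, Matrix.mul_smul, ← Matrix.mul_assoc, J0_transpose_mul_J0, Matrix.one_mul,
    Matrix.inv_def, Ring.inverse_eq_inv', smul_smul, ← div_eq_mul_inv, Real.sqrt_div_self]

theorem hasDerivAt_inv_sqrt_quadratic {a : ℝ} (ha : 0 < a) (b c : ℝ) :
    HasDerivAt (fun t => (√(a ^ 2 + t * b + t ^ 2 * c))⁻¹) (-b / (2 * a ^ 3)) 0 := by
  have hq : HasDerivAt (fun t => a ^ 2 + t * b + t ^ 2 * c) b 0 := by
    refine ((((hasDerivAt_id (0 : ℝ)).mul_const b).const_add (a ^ 2)).add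
      ((hasDerivAt_pow 2 (0 : ℝ)).mul_const c)).congr_deriv ?_
    simp
  have hq0 : √(a ^ 2 + 0 * b + 0 ^ 2 * c) = a := by simpa using Real.sqrt_sq ha.le
  refine ((hq.sqrt ?_).inv ?_).congr_deriv ?_
  · simp [ha.ne']
  · rw [hq0]; exact ha.ne'
  · rw [hq0]; field_simp

theorem statement7_general (l : ℝ) (ν : Matrix (Fin 2) (Fin 2) ℝ) :
    ∀ i j : Fin 2,
      HasDerivAt
        (fun t : ℝ =>
          (J0ᵀ * hodgeJ (Real.exp (2 * l) • (1 : Matrix (Fin 2) (Fin 2) ℝ) + t • ν)) i j)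
        ((-(Real.exp (-(2 * l))) • traceFree ν) i j) 0 := by
  intro i j
  rw [Real.exp_neg]
  set a := Real.exp (2 * l)
  have ha : 0 < a := Real.exp_pos _
  simp only [J0_transpose_mul_hodgeJ, Matrix.det_fin_two_smul_one_add_smul,
    Matrix.adjugate_fin_two_smul_one_add_smul, Matrix.smul_apply, Matrix.add_apply, smul_eq_mul]
  have hadj : HasDerivAt (fun t => a * (1 : Matrix (Fin 2) (Fin 2) ℝ) i j + t * ν.adjugate i j)
      (ν.adjugate i j) 0 := ((hasDerivAt_id 0).mul_const _).const_add _ |>.congr_deriv (one_mul _)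
  refine ((hasDerivAt_inv_sqrt_quadratic ha _ _).mul hadj).congr_deriv ?_
  have hsqrt : √(a ^ 2 + 0 * (a * ν.trace) + 0 ^ 2 * ν.det) = a := by
    simpa using Real.sqrt_sq ha.le
  rw [hsqrt, Matrix.adjugate_fin_two_eq_trace_smul_one_sub, traceFree]
  simp only [Matrix.sub_apply, Matrix.smul_apply, smul_eq_mul]
  field_simp
  ring

/-- equation (II.19) of the paper. For `λ ∈ ℝ` and `ν` a symmetric
`2 × 2` real matrix, the map `t ↦ J₀ᵗ·J(e^{2λ}·I₂ + t·ν)` has derivative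
`−e^{−2λ}·ν⁰` at `t = 0` (i.e. each entry of the matrix-valued map has the
corresponding entry of `−e^{−2λ}·ν⁰` as derivative at `0`). -/
theorem statement7 (l : ℝ) (ν : Matrix (Fin 2) (Fin 2) ℝ) (hν : ν.IsSymm) :
    ∀ i j : Fin 2,
      HasDerivAt
        (fun t : ℝ =>
          (J0ᵀ * hodgeJ (Real.exp (2 * l) • (1 : Matrix (Fin 2) (Fin 2) ℝ) + t • ν)) i j)
        ((-(Real.exp (-(2 * l))) • traceFree ν) i j) 0 :=
  statement7_general l ν
end

section
/- Let D ⊆ ℝ² be open, λ : D → ℝ, and let Φ : D → ℝᵐ be a differentiable conformal map: ∂_{x_1}Φ·∂_{x_2}Φ = 0 and |∂_{x_1}Φ|² = |∂_{x_2}Φ|² = e^{2λ}. Let L : D → ℝᵐ be differentiable with ∂_{x_1}L = e^{−2λ}·∂_{x_1}Φ and ∂_{x_2}L = −e^{−2λ}·∂_{x_2}Φ, and let w : D → ℝᵐ be differentiable. Let ν denote the derivative at t = 0 of the induced-metric matrices (G_t)_{ij} = ∂_{x_i}(Φ + tw)·∂_{x_j}(Φ + tw). Then the trace-free part ν⁰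 := ν − (tr ν/2)·I₂ satisfies, pointwise on D, ν⁰ = e^{2λ}·[ (∇w·∇L)·S₁ + (∇w·∇⊥L)·S₂ ], where ∇w·∇L := ∂_{x_1}w·∂_{x_1}L + ∂_{x_2}w·∂_{x_2}L, ∇w·∇⊥L := −∂_{x_1}w·∂_{x_2}L + ∂_{x_2}w·∂_{x_1}L, S₁ = [[1,0],[0,−1]] and S₂ = [[0,1],[1,0]]. -/
open Matrix

/-- The partial derivative `∂_{x_i} F` of a map `F : ℝ² → ℝᵐ`. -/
noncomputable def pderiv' {m : ℕ} (F : (Fin 2 → ℝ) → Fin m → ℝ) (i : Fin 2)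
    (x : Fin 2 → ℝ) : Fin m → ℝ :=
  fderiv ℝ F x (Pi.single i 1)

/-- The matrix `(G_F)_{ij} = ∂_{x_i}F · ∂_{x_j}F` of the metric induced on `ℝ²` by a
map `F : ℝ² → ℝᵐ` (Euclidean dot products in `ℝᵐ`). -/
noncomputable def inducedMetric {m : ℕ} (F : (Fin 2 → ℝ) → Fin m → ℝ)
    (x : Fin 2 → ℝ) : Matrix (Fin 2) (Fin 2) ℝ :=
  Matrix.of fun i j => pderiv' F i x ⬝ᵥ pderiv' F j x

/-- The matrix `S₁ = [[1,0],[0,−1]]`. -/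
def S1 : Matrix (Fin 2) (Fin 2) ℝ := !![1, 0; 0, -1]

/-- The matrix `S₂ = [[0,1],[1,0]]`. -/
def S2 : Matrix (Fin 2) (Fin 2) ℝ := !![0, 1; 1, 0]

/-!
The first variation of the metric is the symmetrised product `νᵢⱼ = ∂ᵢΦ·∂ⱼw + ∂ᵢw·∂ⱼΦ`,
whose trace-free part is `(∂₁Φ·∂₁w − ∂₂Φ·∂₂w) S₁ + (∂₁Φ·∂₂w + ∂₂Φ·∂₁w) S₂`; substituting
`∂₁Φ = e^{2λ} ∂₁L` and `∂₂Φ = −e^{2λ} ∂₂L` gives the formula.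
-/

theorem pderiv'_add_smul {m : ℕ} {Φ w : (Fin 2 → ℝ) → Fin m → ℝ} {x : Fin 2 → ℝ}
    (hΦ : DifferentiableAt ℝ Φ x) (hw : DifferentiableAt ℝ w x) (t : ℝ) (i : Fin 2) :
    pderiv' (fun y => Φ y + t • w y) i x = pderiv' Φ i x + t • pderiv' w i x := by
  rw [pderiv', fderiv_fun_add (g := fun y => t • w y) hΦ (hw.const_smul t),
    fderiv_fun_const_smul hw]
  rfl

theorem hasDerivAt_add_smul_dotProduct_add_smul {m : ℕ} (u v p q : Fin m → ℝ) :
    HasDerivAt (fun t : ℝ => (u + t • p) ⬝ᵥ (v + t • q)) (u ⬝ᵥ q + p ⬝ᵥ v) 0 := by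
  have hexpand : (fun t : ℝ => (u + t • p) ⬝ᵥ (v + t • q))
      = fun t => u ⬝ᵥ v + t * (u ⬝ᵥ q + p ⬝ᵥ v) + t ^ 2 * (p ⬝ᵥ q) := by
    funext t
    simp only [dotProduct_add, add_dotProduct, smul_dotProduct, dotProduct_smul, smul_eq_mul]
    ring
  rw [hexpand]
  simpa using (((hasDerivAt_id (0 : ℝ)).mul_const (u ⬝ᵥ q + p ⬝ᵥ v)).const_add (u ⬝ᵥ v)).fun_add
    ((hasDerivAt_pow 2 (0 : ℝ)).mul_const (p ⬝ᵥ q))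

theorem deriv_inducedMetric_add_smul {m : ℕ} {Φ w : (Fin 2 → ℝ) → Fin m → ℝ}
    {x : Fin 2 → ℝ} (hΦ : DifferentiableAt ℝ Φ x) (hw : DifferentiableAt ℝ w x)
    (i j : Fin 2) :
    deriv (fun t : ℝ => inducedMetric (fun y => Φ y + t • w y) x i j) 0
      = pderiv' Φ i x ⬝ᵥ pderiv' w j x + pderiv' w i x ⬝ᵥ pderiv' Φ j x := by
  simp only [inducedMetric, of_apply, pderiv'_add_smul hΦ hw]
  exact (hasDerivAt_add_smul_dotProduct_add_smul _ _ _ _).deriv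

theorem traceFree_symmetrizedDotProduct {m : ℕ} (a b : Fin 2 → Fin m → ℝ) :
    let ν : Matrix (Fin 2) (Fin 2) ℝ := of fun i j => a i ⬝ᵥ b j + b i ⬝ᵥ a j
    ν - (ν.trace / 2) • 1
      = (a 0 ⬝ᵥ b 0 - a 1 ⬝ᵥ b 1) • S1 + (a 0 ⬝ᵥ b 1 + a 1 ⬝ᵥ b 0) • S2 := by
  intro ν
  ext i j
  fin_cases i <;> fin_cases j <;>
    simp [ν, S1, S2, trace_fin_two, one_apply, dotProduct_comm (b _)] <;> ring

theorem statement10_general {m : ℕ} (D : Set (Fin 2 → ℝ))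
    (lam : (Fin 2 → ℝ) → ℝ)
    (Φ L w : (Fin 2 → ℝ) → Fin m → ℝ)
    (hΦ : ∀ x ∈ D, DifferentiableAt ℝ Φ x)
    (hw : ∀ x ∈ D, DifferentiableAt ℝ w x)
    (hL1 : ∀ x ∈ D, pderiv' L 0 x = Real.exp (-(2 * lam x)) • pderiv' Φ 0 x)
    (hL2 : ∀ x ∈ D, pderiv' L 1 x = -(Real.exp (-(2 * lam x))) • pderiv' Φ 1 x) :
    ∀ x ∈ D,
      let ν : Matrix (Fin 2) (Fin 2) ℝ :=
        Matrix.of fun i j =>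
          deriv (fun t : ℝ => inducedMetric (fun y => Φ y + t • w y) x i j) 0
      ν - (ν.trace / 2) • 1 =
        Real.exp (2 * lam x) •
          ((pderiv' w 0 x ⬝ᵥ pderiv' L 0 x + pderiv' w 1 x ⬝ᵥ pderiv' L 1 x) • S1
            + (-(pderiv' w 0 x ⬝ᵥ pderiv' L 1 x) + pderiv' w 1 x ⬝ᵥ pderiv' L 0 x) • S2) := by
  intro x hx ν
  have hν : ν = of fun i j => pderiv' Φ i x ⬝ᵥ pderiv' w j x + pderiv' w i x ⬝ᵥ pderiv' Φ j x :=
    ext fun i j => deriv_inducedMetric_add_smul (hΦ x hx) (hw x hx) i j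
  have hexp : Real.exp (2 * lam x) * Real.exp (-(2 * lam x)) = 1 := by
    rw [← Real.exp_add, add_neg_cancel, Real.exp_zero]
  rw [hν, traceFree_symmetrizedDotProduct, hL1 x hx, hL2 x hx]
  simp only [dotProduct_comm (pderiv' w _ x), smul_dotProduct, neg_smul,
    neg_dotProduct, smul_eq_mul]
  rw [smul_add, smul_smul, smul_smul]
  congr 2
  · linear_combination (pderiv' Φ 1 x ⬝ᵥ pderiv' w 1 x - pderiv' Φ 0 x ⬝ᵥ pderiv' w 0 x) * hexp
  · linear_combination
      -(pderiv' Φ 0 x ⬝ᵥ pderiv' w 1 x + pderiv' Φ 1 x ⬝ᵥ pderiv' w 0 x) * hexp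

/-- equation (II.25) of the paper. Let `Φ : D → ℝᵐ` be a conformal
differentiable map with conformal factor `e^{2λ}` on an open set `D ⊆ ℝ²`, let `L` be
its conjugate map (`∂₁L = e^{−2λ}∂₁Φ`, `∂₂L = −e^{−2λ}∂₂Φ`) and `w` differentiable.
If `ν` denotes the derivative at `t = 0` of the induced metrics of `Φ + t·w`, then its
trace-free part is `ν⁰ = e^{2λ}·[(∇w·∇L)·S₁ + (∇w·∇⊥L)·S₂]` pointwise on `D`, where
`∇w·∇L = ∂₁w·∂₁L + ∂₂w·∂₂L` and `∇w·∇⊥L = −∂₁w·∂₂L + ∂₂w·∂₁L`. -/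
theorem statement10 {m : ℕ} (D : Set (Fin 2 → ℝ)) (hD : IsOpen D)
    (lam : (Fin 2 → ℝ) → ℝ)
    (Φ L w : (Fin 2 → ℝ) → Fin m → ℝ)
    (hΦ : ∀ x ∈ D, DifferentiableAt ℝ Φ x)
    (hL : ∀ x ∈ D, DifferentiableAt ℝ L x)
    (hw : ∀ x ∈ D, DifferentiableAt ℝ w x)
    (hconf : ∀ x ∈ D, pderiv' Φ 0 x ⬝ᵥ pderiv' Φ 1 x = 0)
    (hconf1 : ∀ x ∈ D, pderiv' Φ 0 x ⬝ᵥ pderiv' Φ 0 x = Real.exp (2 * lam x))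
    (hconf2 : ∀ x ∈ D, pderiv' Φ 1 x ⬝ᵥ pderiv' Φ 1 x = Real.exp (2 * lam x))
    (hL1 : ∀ x ∈ D, pderiv' L 0 x = Real.exp (-(2 * lam x)) • pderiv' Φ 0 x)
    (hL2 : ∀ x ∈ D, pderiv' L 1 x = -(Real.exp (-(2 * lam x))) • pderiv' Φ 1 x) :
    ∀ x ∈ D,
      let ν : Matrix (Fin 2) (Fin 2) ℝ :=
        Matrix.of fun i j =>
          deriv (fun t : ℝ => inducedMetric (fun y => Φ y + t • w y) x i j) 0
      ν - (ν.trace / 2) • 1 =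
        Real.exp (2 * lam x) •
          ((pderiv' w 0 x ⬝ᵥ pderiv' L 0 x + pderiv' w 1 x ⬝ᵥ pderiv' L 1 x) • S1
            + (-(pderiv' w 0 x ⬝ᵥ pderiv' L 1 x) + pderiv' w 1 x ⬝ᵥ pderiv' L 0 x) • S2) :=
  statement10_general D lam Φ L w hΦ hw hL1 hL2
end

section
/- Let E be a real Banach space, let L¹,…,Lⁿ : E → ℝ be continuous linear forms with L¹ = 0 and such that the map w ↦ (L²(w),…,Lⁿ(w)) is surjective onto ℝ^{n−1}, and let Q¹,…,Qⁿ : E → ℝ be continuous quadratic forms, i.e. Q^j(w) = B^j(w,w) for continuous symmetric bilinear forms B^j on E. Assume there exist bounded sequences (w_k⁺) and (w_k⁻) in E such that for every j, L^j(w_k^±) → 0 as k → ∞, and Q¹(w_k⁺) → 1, Q¹(w_k⁻) → −1. Then there exists a neighborhood U of 0 in ℝⁿ such that for every u = (u₁,…,u_n) ∈ U there exists w ∈ E with u_j = L^j(w) + Q^j(w) for all j = 1,…,n. -/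
/-
Take `a = w_k⁺`, `b = w_k⁻` for a large `k`, a bounded right inverse `S` of
`Λ = (L²,…,Lⁿ)`, and the broken line `φ t = t⁺ • a + t⁻ • b`. For `|t| ≤ T` the equations
`j = 2,…,n` for `w = φ t + S y` form a fixed-point problem `y = u' - Λ (φ t) - Q'(φ t + S y)`,
which is a contraction on a ball of radius `r ~ T²`; its solution `y t` depends continuously
on `t`. The first equation is then `Q¹(φ t + S (y t)) = u₁`, whose left side is close to
`T² Q¹(a) > 0` at `t = T` and to `T² Q¹(b) < 0` at `t = -T`, so the intermediate value
theorem solves it whenever `|u| ≤ T²/4`.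
-/

open Filter Set Metric Topology
open scoped NNReal

theorem ContinuousLinearMap.norm_apply_self_sub_apply_self_le {𝕜 E F : Type*}
    [NontriviallyNormedField 𝕜] [SeminormedAddCommGroup E] [NormedSpace 𝕜 E]
    [SeminormedAddCommGroup F] [NormedSpace 𝕜 F] (β : E →L[𝕜] E →L[𝕜] F) (p q : E) :
    ‖β p p - β q q‖ ≤ ‖β‖ * (‖p‖ + ‖q‖) * ‖p - q‖ := by
  have h : β p p - β q q = β p (p - q) + β (p - q) q := by
    simp only [map_sub, sub_apply]; abel
  calc ‖β p p - β q q‖ ≤ ‖β‖ * ‖p‖ * ‖p - q‖ + ‖β‖ * ‖p - q‖ * ‖q‖ := by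
        rw [h]; exact (norm_add_le _ _).trans (add_le_add (β.le_opNorm₂ _ _) (β.le_opNorm₂ _ _))
    _ = ‖β‖ * (‖p‖ + ‖q‖) * ‖p - q‖ := by ring

theorem exists_continuousOn_fixedPoint_of_lipschitzOnWith {P X : Type*} [PseudoMetricSpace P]
    [MetricSpace X] [CompleteSpace X] {s : Set P} {D : Set X} (hD : IsClosed D)
    (hDne : D.Nonempty) {K : ℝ≥0} (hK : K < 1) {C : ℝ} {G : P → X → X}
    (hmaps : ∀ t ∈ s, MapsTo (G t) D D) (hcontr : ∀ t ∈ s, LipschitzOnWith K (G t) D)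
    (hparam : ∀ x ∈ D, ∀ t ∈ s, ∀ t' ∈ s, dist (G t x) (G t' x) ≤ C * dist t t') :
    ∃ y : P → X, ContinuousOn y s ∧ ∀ t ∈ s, y t ∈ D ∧ G t (y t) = y t := by
  have hfix : ∀ t, ∃ x, t ∈ s → x ∈ D ∧ G t x = x := by
    intro t
    by_cases ht : t ∈ s
    · obtain ⟨x, hxD, hx, -⟩ := ContractingWith.exists_fixedPoint' hD.isComplete (hmaps t ht)
        ⟨hK, (hcontr t ht).mapsToRestrict (hmaps t ht)⟩ hDne.some_mem (edist_ne_top _ _)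
      exact ⟨x, fun _ => ⟨hxD, hx⟩⟩
    · exact ⟨hDne.some, fun h => absurd h ht⟩
  choose y hy using hfix
  refine ⟨y, ?_, hy⟩
  have hK' : (0 : ℝ) < 1 - K := sub_pos.2 (by exact_mod_cast hK)
  refine (LipschitzOnWith.of_dist_le_mul fun t ht t' ht' => ?_).continuousOn
    (K := (C / (1 - K)).toNNReal)
  obtain ⟨hyt, hGt⟩ := hy t ht
  obtain ⟨hyt', hGt'⟩ := hy t' ht'
  have h : dist (y t) (y t') ≤ K * dist (y t) (y t') + C * dist t t' :=
    calc dist (y t) (y t') = dist (G t (y t)) (G t' (y t')) := by rw [hGt, hGt']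
      _ ≤ dist (G t (y t)) (G t (y t')) + dist (G t (y t')) (G t' (y t')) := dist_triangle ..
      _ ≤ K * dist (y t) (y t') + C * dist t t' :=
        add_le_add ((hcontr t ht).dist_le_mul _ hyt _ hyt') (hparam _ hyt' t ht t' ht')
  calc dist (y t) (y t') ≤ C / (1 - K) * dist t t' := by
        rw [div_mul_eq_mul_div, le_div_iff₀ hK']; linarith
    _ ≤ _ := by gcongr; exact Real.le_coe_toNNReal _

section SignedPath

variable {E F : Type*} [NormedAddCommGroup E] [NormedSpace ℝ E]
  [NormedAddCommGroup F] [NormedSpace ℝ F]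

def signedPath (a b : E) (t : ℝ) : E := t⁺ • a + t⁻ • b

variable {a b : E} {t : ℝ}

theorem signedPath_of_nonneg (ht : 0 ≤ t) : signedPath a b t = t • a := by
  simp [signedPath, posPart_of_nonneg ht, negPart_of_nonneg ht]

theorem signedPath_neg_of_nonneg (ht : 0 ≤ t) : signedPath a b (-t) = t • b := by
  simp [signedPath, ht]

theorem map_signedPath (f : E →L[ℝ] F) : f (signedPath a b t) = signedPath (f a) (f b) t := by
  simp [signedPath]

theorem norm_signedPath_le {R : ℝ} (ha : ‖a‖ ≤ R) (hb : ‖b‖ ≤ R) :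
    ‖signedPath a b t‖ ≤ |t| * R :=
  calc ‖signedPath a b t‖ ≤ t⁺ * ‖a‖ + t⁻ * ‖b‖ := by
        refine (norm_add_le _ _).trans ?_
        rw [norm_smul, norm_smul, Real.norm_of_nonneg (posPart_nonneg t),
          Real.norm_of_nonneg (negPart_nonneg t)]
    _ ≤ t⁺ * R + t⁻ * R := by gcongr
    _ = |t| * R := by rw [← add_mul, posPart_add_negPart]

theorem lipschitzWith_signedPath (a b : E) : LipschitzWith (‖a‖₊ + ‖b‖₊) (signedPath a b) := by
  refine LipschitzWith.of_dist_le_mul fun t t' => ?_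
  have hpos : ‖t⁺ - t'⁺‖ ≤ dist t t' := by
    simpa [dist_eq_norm] using lipschitzWith_posPart.dist_le_mul t t'
  have hneg : ‖t⁻ - t'⁻‖ ≤ dist t t' := by
    simpa [dist_eq_norm] using lipschitzWith_negPart.dist_le_mul t t'
  calc dist (signedPath a b t) (signedPath a b t')
      = ‖(t⁺ - t'⁺) • a + (t⁻ - t'⁻) • b‖ := by
        rw [dist_eq_norm, signedPath, signedPath, sub_smul, sub_smul]; abel_nf
    _ ≤ ‖t⁺ - t'⁺‖ * ‖a‖ + ‖t⁻ - t'⁻‖ * ‖b‖ :=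
        (norm_add_le _ _).trans_eq (by rw [norm_smul, norm_smul])
    _ ≤ dist t t' * ‖a‖ + dist t t' * ‖b‖ := by gcongr
    _ = ↑(‖a‖₊ + ‖b‖₊) * dist t t' := by push_cast; ring

end SignedPath

/-- With `R` bounding `‖a‖, ‖b‖`, `M` bounding the bilinear parts and `σ = ‖S‖`, the three
inequalities make `correctionMap` send the ball of radius `r` into itself and contract it by `1/2`
for `|t| ≤ T`, and keep the error in `β₀` at `t = ±T` below `T²/4`. -/
def AdmissibleScale (R M σ T r : ℝ) : Prop :=
  0 < T ∧ 0 ≤ r ∧ T ^ 2 / 4 + T ^ 2 + M * (R * T + σ * r) ^ 2 ≤ r ∧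
    2 * M * (R * T + σ * r) * σ ≤ 1 / 2 ∧ M * (2 * R * T + σ * r) * (σ * r) ≤ T ^ 2 / 4

theorem exists_admissibleScale {R M σ : ℝ} (hR : 0 ≤ R) (hM : 0 ≤ M) (hσ : 0 ≤ σ) :
    ∃ T r, AdmissibleScale R M σ T r := by
  set c := 2 + M * (R + 1) ^ 2 with hc
  have hc2 : 2 ≤ c := by rw [hc]; nlinarith [sq_nonneg (R + 1)]
  have hsmall : ∀ k : ℝ, ∀ᶠ T in 𝓝[>] (0 : ℝ), k * T ≤ 1 := fun k =>
    (((continuous_const_mul k).tendsto' 0 0 (mul_zero k)).mono_left nhdsWithin_le_nhds).eventually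
      (eventually_le_nhds one_pos)
  obtain ⟨T, ⟨hσT, hMT⟩, (hT : 0 < T)⟩ :=
    (((hsmall (σ * c)).and (hsmall (8 * M * σ * c * (R + 1)))).and self_mem_nhdsWithin).exists
  have hσr : σ * (c * T ^ 2) ≤ T := by nlinarith
  have hRT : R * T + σ * (c * T ^ 2) ≤ (R + 1) * T := by linarith
  have hσr0 : 0 ≤ σ * (c * T ^ 2) := by positivity
  refine ⟨T, c * T ^ 2, hT, by positivity, ?_, ?_, ?_⟩
  · have h : M * (R * T + σ * (c * T ^ 2)) ^ 2 ≤ M * ((R + 1) * T) ^ 2 := by gcongr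
    nlinarith
  · have h : 2 * M * (R * T + σ * (c * T ^ 2)) * σ ≤ 2 * M * ((R + 1) * T) * σ := by gcongr
    nlinarith
  · have h : M * (2 * R * T + σ * (c * T ^ 2)) * (σ * (c * T ^ 2))
        ≤ M * (2 * (R + 1) * T) * (σ * (c * T ^ 2)) := by gcongr; linarith
    nlinarith

section CorrectionMap

variable {E V : Type*} [NormedAddCommGroup E] [NormedSpace ℝ E]
  [NormedAddCommGroup V] [NormedSpace ℝ V]
  (Λ : E →L[ℝ] V) (S : V →L[ℝ] E) (β : E →L[ℝ] E →L[ℝ] V)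

noncomputable def correctionMap (v : V) (x : E) (y : V) : V := v - Λ x - β (x + S y) (x + S y)

variable {Λ S} in
theorem correctionMap_eq_self_iff (hS : ∀ v, Λ (S v) = v) {v : V} {x : E} {y : V} :
    correctionMap Λ S β v x y = y ↔ Λ (x + S y) + β (x + S y) (x + S y) = v := by
  rw [correctionMap, Λ.map_add, hS, sub_sub, sub_eq_iff_eq_add, eq_comm, add_left_comm,
    ← add_assoc]

theorem norm_correctionMap_le (v : V) (x : E) (y : V) :
    ‖correctionMap Λ S β v x y‖ ≤ ‖v‖ + ‖Λ x‖ + ‖β‖ * (‖x‖ + ‖S‖ * ‖y‖) ^ 2 := by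
  have hw : ‖x + S y‖ ≤ ‖x‖ + ‖S‖ * ‖y‖ := (norm_add_le _ _).trans (by gcongr; exact S.le_opNorm y)
  calc ‖correctionMap Λ S β v x y‖ ≤ ‖v‖ + ‖Λ x‖ + ‖β‖ * ‖x + S y‖ * ‖x + S y‖ :=
        (norm_sub_le _ _).trans (add_le_add (norm_sub_le _ _) (β.le_opNorm₂ _ _))
    _ ≤ ‖v‖ + ‖Λ x‖ + ‖β‖ * (‖x‖ + ‖S‖ * ‖y‖) ^ 2 := by rw [mul_assoc, ← sq]; gcongr

theorem norm_correctionMap_sub_correctionMap_le (v : V) (x : E) (y y' : V) :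
    ‖correctionMap Λ S β v x y - correctionMap Λ S β v x y'‖
      ≤ ‖β‖ * (2 * ‖x‖ + ‖S‖ * (‖y‖ + ‖y'‖)) * ‖S‖ * ‖y - y'‖ := by
  have hsum : ‖x + S y'‖ + ‖x + S y‖ ≤ 2 * ‖x‖ + ‖S‖ * (‖y‖ + ‖y'‖) := by
    have := norm_add_le x (S y'); have := norm_add_le x (S y)
    have := S.le_opNorm y; have := S.le_opNorm y'
    nlinarith
  have hdiff : ‖(x + S y') - (x + S y)‖ ≤ ‖S‖ * ‖y - y'‖ := by
    rw [add_sub_add_left_eq_sub, ← map_sub, norm_sub_rev y]; exact S.le_opNorm _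
  calc ‖correctionMap Λ S β v x y - correctionMap Λ S β v x y'‖
      = ‖β (x + S y') (x + S y') - β (x + S y) (x + S y)‖ := by
        rw [correctionMap, correctionMap]; congr 1; abel
    _ ≤ ‖β‖ * (‖x + S y'‖ + ‖x + S y‖) * ‖(x + S y') - (x + S y)‖ :=
        β.norm_apply_self_sub_apply_self_le _ _
    _ ≤ ‖β‖ * (2 * ‖x‖ + ‖S‖ * (‖y‖ + ‖y'‖)) * (‖S‖ * ‖y - y'‖) := by gcongr
    _ = _ := by ring

theorem norm_correctionMap_sub_correctionMap_base_le (v : V) (x x' : E) (y : V) :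
    ‖correctionMap Λ S β v x y - correctionMap Λ S β v x' y‖
      ≤ (‖Λ‖ + ‖β‖ * (‖x‖ + ‖x'‖ + 2 * ‖S‖ * ‖y‖)) * ‖x - x'‖ := by
  have hsum : ‖x' + S y‖ + ‖x + S y‖ ≤ ‖x‖ + ‖x'‖ + 2 * ‖S‖ * ‖y‖ := by
    have := norm_add_le x (S y); have := norm_add_le x' (S y); have := S.le_opNorm y
    linarith
  calc ‖correctionMap Λ S β v x y - correctionMap Λ S β v x' y‖
      = ‖Λ (x' - x) + (β (x' + S y) (x' + S y) - β (x + S y) (x + S y))‖ := by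
        rw [correctionMap, correctionMap, map_sub]; congr 1; abel
    _ ≤ ‖Λ‖ * ‖x' - x‖ + ‖β‖ * (‖x' + S y‖ + ‖x + S y‖) * ‖(x' + S y) - (x + S y)‖ :=
        (norm_add_le _ _).trans
          (add_le_add (Λ.le_opNorm _) (β.norm_apply_self_sub_apply_self_le _ _))
    _ ≤ ‖Λ‖ * ‖x - x'‖ + ‖β‖ * (‖x‖ + ‖x'‖ + 2 * ‖S‖ * ‖y‖) * ‖x - x'‖ := by
        rw [add_sub_add_right_eq_sub, norm_sub_rev x']; gcongr
    _ = _ := by ring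

end CorrectionMap

section Solution

variable {E V : Type*} [NormedAddCommGroup E] [NormedSpace ℝ E]
  [NormedAddCommGroup V] [NormedSpace ℝ V] [CompleteSpace V]
  {Λ : E →L[ℝ] V} {S : V →L[ℝ] E}

theorem exists_continuousOn_solution_along_path (hS : ∀ v, Λ (S v) = v) (β : E →L[ℝ] E →L[ℝ] V)
    {P : Type*} [PseudoMetricSpace P] {φ : P → E} {ℓ : ℝ≥0} (hφ : LipschitzWith ℓ φ)
    {s : Set P} {ρ δ M r : ℝ} (hφs : ∀ t ∈ s, ‖φ t‖ ≤ ρ ∧ ‖Λ (φ t)‖ ≤ δ) (hβ : ‖β‖ ≤ M)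
    {v : V} (hr : 0 ≤ r) (hmaps : ‖v‖ + δ + M * (ρ + ‖S‖ * r) ^ 2 ≤ r)
    (hcontr : 2 * M * (ρ + ‖S‖ * r) * ‖S‖ ≤ 1 / 2) :
    ∃ y : P → V, ContinuousOn y s ∧ ∀ t ∈ s, ‖y t‖ ≤ r ∧
      Λ (φ t + S (y t)) + β (φ t + S (y t)) (φ t + S (y t)) = v := by
  have hM : 0 ≤ M := (norm_nonneg β).trans hβ
  have hG_mapsTo : ∀ t ∈ s,
      MapsTo (correctionMap Λ S β v (φ t)) (closedBall 0 r) (closedBall 0 r) := by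
    intro t ht y hy
    rw [mem_closedBall_zero_iff] at hy ⊢
    refine (norm_correctionMap_le Λ S β v _ y).trans (le_trans ?_ hmaps)
    gcongr
    · exact (hφs t ht).2
    · exact (hφs t ht).1
  have hG_lip : ∀ t ∈ s,
      LipschitzOnWith 2⁻¹ (correctionMap Λ S β v (φ t)) (closedBall 0 r) := by
    intro t ht
    refine LipschitzOnWith.of_dist_le_mul fun y hy y' hy' => ?_
    rw [mem_closedBall_zero_iff] at hy hy'
    rw [dist_eq_norm, dist_eq_norm]
    refine (norm_correctionMap_sub_correctionMap_le Λ S β v _ y y').trans ?_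
    calc ‖β‖ * (2 * ‖φ t‖ + ‖S‖ * (‖y‖ + ‖y'‖)) * ‖S‖ * ‖y - y'‖
        ≤ M * (2 * ρ + ‖S‖ * (r + r)) * ‖S‖ * ‖y - y'‖ := by gcongr; exact (hφs t ht).1
      _ ≤ _ := by
        push_cast
        have := mul_le_mul_of_nonneg_right hcontr (norm_nonneg (y - y'))
        linarith
  have hG_base : ∀ y ∈ closedBall 0 r, ∀ t ∈ s, ∀ t' ∈ s,
      dist (correctionMap Λ S β v (φ t) y) (correctionMap Λ S β v (φ t') y)
        ≤ (‖Λ‖ + M * (2 * ρ + 2 * ‖S‖ * r)) * ℓ * dist t t' := by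
    intro y hy t ht t' ht'
    rw [mem_closedBall_zero_iff] at hy
    have hsum : ‖φ t‖ + ‖φ t'‖ + 2 * ‖S‖ * ‖y‖ ≤ 2 * ρ + 2 * ‖S‖ * r := by
      have := (hφs t ht).1; have := (hφs t' ht').1; gcongr; linarith
    calc _ ≤ (‖Λ‖ + ‖β‖ * (‖φ t‖ + ‖φ t'‖ + 2 * ‖S‖ * ‖y‖)) * dist (φ t) (φ t') := by
          rw [dist_eq_norm, dist_eq_norm]
          exact norm_correctionMap_sub_correctionMap_base_le Λ S β v _ _ y
      _ ≤ (‖Λ‖ + M * (2 * ρ + 2 * ‖S‖ * r)) * (ℓ * dist t t') := by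
          have hρ : 0 ≤ ρ := (norm_nonneg _).trans (hφs t ht).1
          gcongr (‖Λ‖ + ?_ * ?_) * ?_
          exact hφ.dist_le_mul t t'
      _ = _ := by ring
  obtain ⟨y, hyc, hy⟩ := exists_continuousOn_fixedPoint_of_lipschitzOnWith isClosed_closedBall
    (nonempty_closedBall.2 hr) (by norm_num) hG_mapsTo hG_lip hG_base
  exact ⟨y, hyc, fun t ht => ⟨mem_closedBall_zero_iff.1 (hy t ht).1,
    (correctionMap_eq_self_iff β hS).1 (hy t ht).2⟩⟩

theorem exists_apply_self_eq_of_admissibleScale (hS : ∀ v, Λ (S v) = v)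
    (β : E →L[ℝ] E →L[ℝ] V) (β₀ : E →L[ℝ] E →L[ℝ] ℝ) {R M T r : ℝ}
    (hadm : AdmissibleScale R M ‖S‖ T r) (hβ : ‖β‖ ≤ M) (hβ₀ : ‖β₀‖ ≤ M) {a b : E}
    (ha : ‖a‖ ≤ R) (hb : ‖b‖ ≤ R) (hΛa : ‖Λ a‖ ≤ T) (hΛb : ‖Λ b‖ ≤ T)
    (hβa : 1 / 2 ≤ β₀ a a) (hβb : β₀ b b ≤ -(1 / 2))
    {u₀ : ℝ} {v : V} (hu₀ : |u₀| ≤ T ^ 2 / 4) (hv : ‖v‖ ≤ T ^ 2 / 4) :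
    ∃ w, β₀ w w = u₀ ∧ Λ w + β w w = v := by
  obtain ⟨hT, hr, hmaps, hcontr, hend⟩ := hadm
  have hR : 0 ≤ R := (norm_nonneg a).trans ha
  have hM : 0 ≤ M := (norm_nonneg β).trans hβ
  have hpath : ∀ t ∈ Icc (-T) T,
      ‖signedPath a b t‖ ≤ R * T ∧ ‖Λ (signedPath a b t)‖ ≤ T ^ 2 := by
    intro t ht
    have ht' : |t| ≤ T := abs_le.2 ht
    refine ⟨(norm_signedPath_le ha hb).trans ?_, ?_⟩
    · rw [mul_comm]; gcongr
    · rw [map_signedPath, sq]; exact (norm_signedPath_le hΛa hΛb).trans (by gcongr)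
  obtain ⟨y, hyc, hy⟩ := exists_continuousOn_solution_along_path hS β (lipschitzWith_signedPath a b)
    hpath hβ hr (by linarith) hcontr
  set w : ℝ → E := fun t => signedPath a b t + S (y t) with hw
  have hwc : ContinuousOn w (Icc (-T) T) :=
    (lipschitzWith_signedPath a b).continuous.continuousOn.add (S.continuous.comp_continuousOn hyc)
  have hendpoint : ∀ t ∈ Icc (-T) T, ∀ c : E, ‖c‖ ≤ R → signedPath a b t = T • c →
      |β₀ (w t) (w t) - T ^ 2 * β₀ c c| ≤ T ^ 2 / 4 := by
    intro t ht c hc hφc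
    have hz : ‖S (y t)‖ ≤ ‖S‖ * r := (S.le_opNorm _).trans (by gcongr; exact (hy t ht).1)
    have hTc : ‖T • c‖ ≤ R * T := by rw [norm_smul, Real.norm_of_nonneg hT.le, mul_comm]; gcongr
    have hsq : β₀ (T • c) (T • c) = T ^ 2 * β₀ c c := by simp; ring
    calc |β₀ (w t) (w t) - T ^ 2 * β₀ c c|
        ≤ ‖β₀‖ * (‖T • c + S (y t)‖ + ‖T • c‖) * ‖(T • c + S (y t)) - T • c‖ := by
          rw [← hsq, ← Real.norm_eq_abs]
          simp only [hw, hφc]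
          exact β₀.norm_apply_self_sub_apply_self_le _ _
      _ ≤ M * (2 * R * T + ‖S‖ * r) * (‖S‖ * r) := by
          rw [add_sub_cancel_left]
          have := norm_add_le (T • c) (S (y t))
          gcongr ?_ * ?_ * ?_
          linarith
      _ ≤ T ^ 2 / 4 := hend
  have hT_mem : T ∈ Icc (-T) T := ⟨by linarith, le_rfl⟩
  have hmT_mem : -T ∈ Icc (-T) T := ⟨le_rfl, by linarith⟩
  have hfT := abs_le.1 (hendpoint T hT_mem a ha (signedPath_of_nonneg hT.le))
  have hfmT := abs_le.1 (hendpoint (-T) hmT_mem b hb (signedPath_neg_of_nonneg hT.le))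
  obtain ⟨t, ht, hft⟩ := intermediate_value_Icc (by linarith) (f := fun t => β₀ (w t) (w t))
    (β₀.continuous₂.comp_continuousOn (hwc.prodMk hwc))
    (show u₀ ∈ Icc _ _ from ⟨by nlinarith [abs_le.1 hu₀], by nlinarith [abs_le.1 hu₀]⟩)
  exact ⟨w t, hft, (hy t ht).2⟩

end Solution

theorem statement11_general
    {E : Type*} [NormedAddCommGroup E] [NormedSpace ℝ E]
    {n : ℕ} (hn : 1 ≤ n)
    (L : Fin n → E →L[ℝ] ℝ)
    (B : Fin n → E →L[ℝ] E →L[ℝ] ℝ)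
    (hL1 : L ⟨0, hn⟩ = 0)
    (hsurj : Function.Surjective
      (fun w : E => fun j : {i : Fin n // i ≠ ⟨0, hn⟩} => L j.1 w))
    (wp wm : ℕ → E)
    (hwpbdd : ∃ C, ∀ k, ‖wp k‖ ≤ C) (hwmbdd : ∃ C, ∀ k, ‖wm k‖ ≤ C)
    (hLp : ∀ j, Tendsto (fun k => L j (wp k)) atTop (nhds 0))
    (hLm : ∀ j, Tendsto (fun k => L j (wm k)) atTop (nhds 0))
    (hQp : Tendsto (fun k => B ⟨0, hn⟩ (wp k) (wp k)) atTop (nhds 1))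
    (hQm : Tendsto (fun k => B ⟨0, hn⟩ (wm k) (wm k)) atTop (nhds (-1))) :
    ∃ U ∈ nhds (0 : Fin n → ℝ), ∀ u ∈ U, ∃ w : E, ∀ j, u j = L j w + B j w w := by
  set j₀ : Fin n := ⟨0, hn⟩
  let Λ : E →L[ℝ] ({i // i ≠ j₀} → ℝ) := ContinuousLinearMap.pi fun j => L j
  let β : E →L[ℝ] E →L[ℝ] ({i // i ≠ j₀} → ℝ) :=
    (ContinuousLinearMap.piEquivL ℝ E _ : _ ≃L[ℝ] _).toContinuousLinearMap.comp
      (ContinuousLinearMap.pi fun j => B j)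
  obtain ⟨S, hS⟩ := Λ.exists_rightInverse_of_surjective (LinearMap.range_eq_top.2 hsurj)
  obtain ⟨Cp, hCp⟩ := hwpbdd
  obtain ⟨Cm, hCm⟩ := hwmbdd
  have hR : 0 ≤ max Cp Cm := (norm_nonneg _).trans ((hCp 0).trans (le_max_left _ _))
  obtain ⟨T, r, hadm⟩ := exists_admissibleScale (M := max ‖β‖ ‖B j₀‖) hR
    (le_max_of_le_left (norm_nonneg β)) (norm_nonneg S)
  have hΛ : ∀ x : ℕ → E, (∀ j, Tendsto (fun k => L j (x k)) atTop (nhds 0)) →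
      ∀ᶠ k in atTop, ‖Λ (x k)‖ ≤ T := fun x hx =>
    (tendsto_zero_iff_norm_tendsto_zero.1
      (tendsto_pi_nhds.2 fun j : {i // i ≠ j₀} => hx j.1)).eventually (eventually_le_nhds hadm.1)
  obtain ⟨k, hΛp, hΛm, hQp', hQm'⟩ := ((hΛ wp hLp).and ((hΛ wm hLm).and
    ((hQp.eventually (eventually_ge_nhds (by norm_num : (1 / 2 : ℝ) < 1))).and
      (hQm.eventually (eventually_le_nhds (by norm_num : (-1 : ℝ) < -(1 / 2))))))).exists
  refine ⟨closedBall 0 (T ^ 2 / 4), closedBall_mem_nhds _ (by have := hadm.1; positivity),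
    fun u hu => ?_⟩
  rw [mem_closedBall_zero_iff] at hu
  obtain ⟨w, hw₀, hw⟩ := exists_apply_self_eq_of_admissibleScale
    (fun v => DFunLike.congr_fun hS v) β (B j₀) hadm (le_max_left _ _) (le_max_right _ _)
    ((hCp k).trans (le_max_left _ _)) ((hCm k).trans (le_max_right _ _)) hΛp hΛm hQp' hQm'
    (u₀ := u j₀) (v := fun j => u j) ((Real.norm_eq_abs _ ▸ norm_le_pi_norm u j₀).trans hu)
    ((pi_norm_le_iff_of_nonneg ((norm_nonneg u).trans hu)).2 fun j =>
      (norm_le_pi_norm u j).trans hu)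
  refine ⟨w, fun j => ?_⟩
  by_cases hj : j = j₀
  · rw [hj, hL1, zero_apply, zero_add, hw₀]
  · simpa [Λ, β] using (congrFun hw ⟨j, hj⟩).symm

/-- abstract form of Proposition II.6 of the paper, surjectivity of
the 2-jet. Let `L¹,…,Lⁿ` be continuous linear forms on a real Banach space `E` with
`L¹ = 0` and `w ↦ (L²(w),…,Lⁿ(w))` surjective onto `ℝ^{n−1}`, and let
`Q^j(w) = B^j(w,w)` be continuous quadratic forms.  If there are bounded sequences
`(w_k⁺)`, `(w_k⁻)` with `L^j(w_k^±) → 0` for every `j`, `Q¹(w_k⁺) → 1` and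
`Q¹(w_k⁻) → −1`, then some neighborhood `U` of `0` in `ℝⁿ` satisfies: for every
`u ∈ U` there is `w ∈ E` with `u_j = L^j(w) + Q^j(w)` for all `j`. -/
theorem statement11
    {E : Type*} [NormedAddCommGroup E] [NormedSpace ℝ E] [CompleteSpace E]
    {n : ℕ} (hn : 1 ≤ n)
    (L : Fin n → E →L[ℝ] ℝ)
    (B : Fin n → E →L[ℝ] E →L[ℝ] ℝ)
    (hBsymm : ∀ j x y, B j x y = B j y x)
    (hL1 : L ⟨0, hn⟩ = 0)
    (hsurj : Function.Surjective
      (fun w : E => fun j : {i : Fin n // i ≠ ⟨0, hn⟩} => L j.1 w))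
    (wp wm : ℕ → E)
    (hwpbdd : ∃ C, ∀ k, ‖wp k‖ ≤ C) (hwmbdd : ∃ C, ∀ k, ‖wm k‖ ≤ C)
    (hLp : ∀ j, Tendsto (fun k => L j (wp k)) atTop (nhds 0))
    (hLm : ∀ j, Tendsto (fun k => L j (wm k)) atTop (nhds 0))
    (hQp : Tendsto (fun k => B ⟨0, hn⟩ (wp k) (wp k)) atTop (nhds 1))
    (hQm : Tendsto (fun k => B ⟨0, hn⟩ (wm k) (wm k)) atTop (nhds (-1))) :
    ∃ U ∈ nhds (0 : Fin n → ℝ), ∀ u ∈ U, ∃ w : E, ∀ j, u j = L j w + B j w w :=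
  statement11_general hn L B hL1 hsurj wp wm hwpbdd hwmbdd hLp hLm hQp hQm
end
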